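/- arXiv:2501.15863 — 8 statements merged into one kernel-verified Lean document; each statement's English description precedes it below -/
import Mathlib

section
/- If the weight v satisfies N < v(x) < M for all x ∈ U for some constants 0 < N < M, then every weighted holomorphic mapping f : U → F is p-summing weighted holomorphic; that is, there exists C ≥ 0 (one may take C = M‖f‖_∞) such that (∑|λᵢ|^p v(xᵢ)^p ‖f(xᵢ)‖^p)^{1/p} ≤ C · sup_{g ∈ B_{Hv(U)}} (∑|λᵢ|^p v(xᵢ)^p |g(xᵢ)|^p)^{1/p} for all finite families. -/
open scoped BigOperators
open MeasureTheory

noncomputable section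

/-- The closed unit ball of the weighted holomorphic space `Hv(U)`. -/
def HvBall {E : Type*} [NormedAddCommGroup E] [NormedSpace ℂ E]
    (v : E → ℝ) (U : Set E) : Set (E → ℂ) :=
  {g | DifferentiableOn ℂ g U ∧ ∀ x ∈ U, v x * ‖g x‖ ≤ 1}

/-- `sup_{g ∈ B_{Hv(U)}} (∑ |λᵢ|^p v(xᵢ)^p |g(xᵢ)|^p)^(1/p)`. -/
def hvSup {E : Type*} [NormedAddCommGroup E] [NormedSpace ℂ E]
    (p : ℝ) (v : E → ℝ) (U : Set E) {n : ℕ} (lam : Fin n → ℂ) (x : Fin n → E) : ℝ :=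
  ⨆ g : HvBall v U, (∑ i, ‖lam i‖ ^ p * v (x i) ^ p * ‖(g : E → ℂ) (x i)‖ ^ p) ^ (1 / p)

/-- `f` satisfies the `p`-summing weighted holomorphic inequality with constant `C`. -/
def PSummingWith {E F : Type*} [NormedAddCommGroup E] [NormedSpace ℂ E]
    [NormedAddCommGroup F] [NormedSpace ℂ F]
    (p : ℝ) (v : E → ℝ) (U : Set E) (f : E → F) (C : ℝ) : Prop :=
  ∀ (n : ℕ) (lam : Fin n → ℂ) (x : Fin n → E), (∀ i, x i ∈ U) →
    (∑ i, ‖lam i‖ ^ p * v (x i) ^ p * ‖f (x i)‖ ^ p) ^ (1 / p) ≤ C * hvSup p v U lam x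

/-- The `p`-summing weighted holomorphic norm `π_p^{Hv}(f)`. -/
def pihv {E F : Type*} [NormedAddCommGroup E] [NormedSpace ℂ E]
    [NormedAddCommGroup F] [NormedSpace ℂ F]
    (p : ℝ) (v : E → ℝ) (U : Set E) (f : E → F) : ℝ :=
  sInf {C | 0 ≤ C ∧ PSummingWith p v U f C}

/-- If `N < v < M` on `U`, then every weighted holomorphic mapping is `p`-summing
weighted holomorphic. -/
theorem stmt1 {E F : Type*} [NormedAddCommGroup E] [NormedSpace ℂ E] [CompleteSpace E]
    [NormedAddCommGroup F] [NormedSpace ℂ F] [CompleteSpace F]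
    (U : Set E) (hU : IsOpen U) (v : E → ℝ) (hvc : ContinuousOn v U)
    (p : ℝ) (hp : 1 ≤ p) (N M : ℝ) (hN : 0 < N) (hNM : N < M)
    (hbd : ∀ x ∈ U, N < v x ∧ v x < M)
    (f : E → F) (hf : DifferentiableOn ℂ f U)
    (hfv : ∃ K, ∀ x ∈ U, v x * ‖f x‖ ≤ K) :
    ∃ C, 0 ≤ C ∧ PSummingWith p v U f C := by
  obtain ⟨K, hK⟩ := hfv
  have hM : 0 < M := hN.trans hNM
  set K' : ℝ := max K 0 with hK'def
  have hK'0 : 0 ≤ K' := le_max_right _ _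
  have hp0 : 0 < p := lt_of_lt_of_le one_pos hp
  refine ⟨M * K' / N, by positivity, ?_⟩
  intro n lam x hx
  -- bound ‖f (x i)‖ by K'/N
  have hfb : ∀ i, ‖f (x i)‖ ≤ K' / N := by
    intro i
    have hv := (hbd _ (hx i)).1
    have h1 : N * ‖f (x i)‖ ≤ K' := by
      calc N * ‖f (x i)‖ ≤ v (x i) * ‖f (x i)‖ :=
            mul_le_mul_of_nonneg_right hv.le (norm_nonneg _)
        _ ≤ K := hK _ (hx i)
        _ ≤ K' := le_max_left _ _
    exact (le_div_iff₀ hN).2 (by linarith [h1])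
  -- the constant test function g₀ = 1/M
  have hg₀ : (fun _ : E => (M : ℂ)⁻¹) ∈ HvBall v U := by
    constructor
    · exact differentiableOn_const _
    · intro y hy
      have hvy := hbd y hy
      have : ‖(M : ℂ)⁻¹‖ = M⁻¹ := by
        rw [norm_inv, Complex.norm_real, Real.norm_of_nonneg hM.le]
      rw [this]
      rw [← div_eq_mul_inv, div_le_one hM]
      exact hvy.2.le
  -- abbreviations
  have hv0 : ∀ i, (0:ℝ) < v (x i) := fun i => hN.trans (hbd _ (hx i)).1
  have hterm : ∀ i, 0 ≤ ‖lam i‖ ^ p * v (x i) ^ p := fun i =>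
    mul_nonneg (Real.rpow_nonneg (norm_nonneg _) _) (Real.rpow_nonneg (hv0 i).le _)
  set S : ℝ := ∑ i, ‖lam i‖ ^ p * v (x i) ^ p
  have hS0 : 0 ≤ S := Finset.sum_nonneg fun i _ => hterm i
  -- the supremum set is bounded above
  have hbdd : BddAbove (Set.range fun g : HvBall v U =>
      (∑ i, ‖lam i‖ ^ p * v (x i) ^ p * ‖(g : E → ℂ) (x i)‖ ^ p) ^ (1 / p)) := by
    refine ⟨(∑ i : Fin n, ‖lam i‖ ^ p) ^ (1 / p), ?_⟩
    rintro _ ⟨g, rfl⟩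
    apply Real.rpow_le_rpow
    · exact Finset.sum_nonneg fun i _ =>
        mul_nonneg (hterm i) (Real.rpow_nonneg (norm_nonneg _) _)
    · apply Finset.sum_le_sum
      intro i _
      have hv := (hbd _ (hx i)).1
      have hg1 : v (x i) * ‖(g : E → ℂ) (x i)‖ ≤ 1 := g.2.2 _ (hx i)
      have h2 : v (x i) ^ p * ‖(g : E → ℂ) (x i)‖ ^ p ≤ 1 := by
        rw [← Real.mul_rpow (hv0 i).le (norm_nonneg _)]
        calc (v (x i) * ‖(g : E → ℂ) (x i)‖) ^ p ≤ 1 ^ p :=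
              Real.rpow_le_rpow (mul_nonneg (hv0 i).le (norm_nonneg _)) hg1 hp0.le
          _ = 1 := Real.one_rpow p
      calc ‖lam i‖ ^ p * v (x i) ^ p * ‖(g : E → ℂ) (x i)‖ ^ p
          = ‖lam i‖ ^ p * (v (x i) ^ p * ‖(g : E → ℂ) (x i)‖ ^ p) := by ring
        _ ≤ ‖lam i‖ ^ p * 1 :=
            mul_le_mul_of_nonneg_left h2 (Real.rpow_nonneg (norm_nonneg _) _)
        _ = ‖lam i‖ ^ p := mul_one _
    · exact one_div_nonneg.2 hp0.le
  -- lower bound for hvSup using g₀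
  have hsup : M⁻¹ * S ^ (1 / p) ≤ hvSup p v U lam x := by
    have hle := le_ciSup hbdd (⟨_, hg₀⟩ : HvBall v U)
    refine le_trans (le_of_eq ?_) hle
    have hnorm : ‖(M : ℂ)⁻¹‖ = M⁻¹ := by
      rw [norm_inv, Complex.norm_real, Real.norm_of_nonneg hM.le]
    have : (∑ i, ‖lam i‖ ^ p * v (x i) ^ p * ‖((fun _ : E => (M : ℂ)⁻¹) : E → ℂ) (x i)‖ ^ p)
        = (M⁻¹) ^ p * S := by
      simp only [hnorm]
      rw [Finset.mul_sum]
      congr 1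
      ext i
      ring
    rw [this, Real.mul_rpow (Real.rpow_nonneg (inv_nonneg.2 hM.le) _) hS0,
      ← Real.rpow_mul (inv_nonneg.2 hM.le), mul_one_div_cancel hp0.ne',
      Real.rpow_one]
  -- main chain
  have hmain : (∑ i, ‖lam i‖ ^ p * v (x i) ^ p * ‖f (x i)‖ ^ p) ^ (1 / p)
      ≤ (K' / N) * S ^ (1 / p) := by
    have hsum : (∑ i, ‖lam i‖ ^ p * v (x i) ^ p * ‖f (x i)‖ ^ p)
        ≤ (K' / N) ^ p * S := by
      rw [Finset.mul_sum]
      apply Finset.sum_le_sum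
      intro i _
      have hv := (hbd _ (hx i)).1
      have h3 : ‖f (x i)‖ ^ p ≤ (K' / N) ^ p :=
        Real.rpow_le_rpow (norm_nonneg _) (hfb i) hp0.le
      calc ‖lam i‖ ^ p * v (x i) ^ p * ‖f (x i)‖ ^ p
          ≤ ‖lam i‖ ^ p * v (x i) ^ p * (K' / N) ^ p :=
            mul_le_mul_of_nonneg_left h3 (hterm i)
        _ = (K' / N) ^ p * (‖lam i‖ ^ p * v (x i) ^ p) := by ring
    calc (∑ i, ‖lam i‖ ^ p * v (x i) ^ p * ‖f (x i)‖ ^ p) ^ (1 / p)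
        ≤ ((K' / N) ^ p * S) ^ (1 / p) := by
          apply Real.rpow_le_rpow ?_ hsum (one_div_nonneg.2 hp0.le)
          exact Finset.sum_nonneg fun i _ =>
            mul_nonneg (hterm i) (Real.rpow_nonneg (norm_nonneg _) _)
      _ = (K' / N) * S ^ (1 / p) := by
          rw [Real.mul_rpow (Real.rpow_nonneg (by positivity) _) hS0,
            ← Real.rpow_mul (by positivity),
            mul_one_div_cancel hp0.ne', Real.rpow_one]
  calc (∑ i, ‖lam i‖ ^ p * v (x i) ^ p * ‖f (x i)‖ ^ p) ^ (1 / p)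
      ≤ (K' / N) * S ^ (1 / p) := hmain
    _ = (M * K' / N) * (M⁻¹ * S ^ (1 / p)) := by
        field_simp
    _ ≤ (M * K' / N) * hvSup p v U lam x :=
        mul_le_mul_of_nonneg_left hsup (by positivity)
end
end

section
/- If f : U → F is weighted holomorphic and its linearization T_f : G_v(U) → F (the unique bounded operator with T_f ∘ Δ_v = f) is p-summing, then f is p-summing weighted holomorphic with π_p^{Hv}(f) ≤ π_p(T_f). -/
open scoped BigOperators
open MeasureTheory

noncomputable section

/-- `sup_{‖φ‖≤1} (∑ ‖φ(xᵢ)‖^p)^(1/p)` over the dual unit ball of `G`. -/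
def linSup {G : Type*} [NormedAddCommGroup G] [NormedSpace ℂ G]
    (p : ℝ) {n : ℕ} (x : Fin n → G) : ℝ :=
  ⨆ φ : {φ : G →L[ℂ] ℂ // ‖φ‖ ≤ 1}, (∑ i, ‖(φ : G →L[ℂ] ℂ) (x i)‖ ^ p) ^ (1 / p)

/-- `T` is a `p`-summing linear operator with constant `C`. -/
def LinPSummingWith {G F : Type*} [NormedAddCommGroup G] [NormedSpace ℂ G]
    [NormedAddCommGroup F] [NormedSpace ℂ F]
    (p : ℝ) (T : G →L[ℂ] F) (C : ℝ) : Prop :=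
  ∀ (n : ℕ) (x : Fin n → G), (∑ i, ‖T (x i)‖ ^ p) ^ (1 / p) ≤ C * linSup p x

/-- The `p`-summing norm `π_p(T)` of a linear operator. -/
def linPi {G F : Type*} [NormedAddCommGroup G] [NormedSpace ℂ G]
    [NormedAddCommGroup F] [NormedSpace ℂ F] (p : ℝ) (T : G →L[ℂ] F) : ℝ :=
  sInf {C | 0 ≤ C ∧ LinPSummingWith p T C}

/-- If the linearization `T_f : G_v(U) → F` of a weighted holomorphic `f` is `p`-summing,
then `f` is `p`-summing weighted holomorphic with `π_p^{Hv}(f) ≤ π_p(T_f)`.  Here `Gv`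
plays the role of `G_v(U)`, `Δ` of the evaluation map `Δ_v`, and the hypotheses record
that the dual unit ball of `Gv` corresponds to `B_{Hv(U)}` via `φ ↦ φ ∘ Δ`. -/
theorem stmt2 {E F Gv : Type*} [NormedAddCommGroup E] [NormedSpace ℂ E] [CompleteSpace E]
    [NormedAddCommGroup F] [NormedSpace ℂ F] [CompleteSpace F]
    [NormedAddCommGroup Gv] [NormedSpace ℂ Gv] [CompleteSpace Gv]
    (U : Set E) (hU : IsOpen U) (v : E → ℝ) (hv : ∀ x ∈ U, 0 < v x)
    (hvc : ContinuousOn v U) (p : ℝ) (hp : 1 ≤ p)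
    (Δ : E → Gv) (hΔdiff : DifferentiableOn ℂ Δ U) (hΔv : ∀ x ∈ U, v x * ‖Δ x‖ ≤ 1)
    (hdual₁ : ∀ φ : Gv →L[ℂ] ℂ, ‖φ‖ ≤ 1 → (fun x => φ (Δ x)) ∈ HvBall v U)
    (hdual₂ : ∀ g ∈ HvBall v U, ∃ φ : Gv →L[ℂ] ℂ, ‖φ‖ ≤ 1 ∧ ∀ x ∈ U, φ (Δ x) = g x)
    (f : E → F) (hf : DifferentiableOn ℂ f U)
    (T : Gv →L[ℂ] F) (hT : ∀ x ∈ U, T (Δ x) = f x)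
    (hTp : ∃ C, 0 ≤ C ∧ LinPSummingWith p T C) :
    (∃ C, 0 ≤ C ∧ PSummingWith p v U f C) ∧ pihv p v U f ≤ linPi p T := by
  have hp0 : 0 < p := lt_of_lt_of_le one_pos hp
  have main : ∀ C, 0 ≤ C → LinPSummingWith p T C → PSummingWith p v U f C := by
    intro C hC hLin n lam x hx
    set y : Fin n → Gv := fun i => lam i • ((v (x i) : ℂ) • Δ (x i)) with hy
    have hvpos : ∀ i, 0 ≤ v (x i) := fun i => (hv (x i) (hx i)).le
    have hnormφ : ∀ (φ : Gv →L[ℂ] ℂ) i,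
        ‖φ (y i)‖ = ‖lam i‖ * v (x i) * ‖φ (Δ (x i))‖ := by
      intro φ i
      simp only [hy, _root_.map_smul, norm_smul, Complex.norm_real, Real.norm_eq_abs,
        abs_of_nonneg (hvpos i), mul_assoc]
    have hnormT : ∀ i, ‖T (y i)‖ = ‖lam i‖ * v (x i) * ‖f (x i)‖ := by
      intro i
      have : T (y i) = lam i • ((v (x i) : ℂ) • f (x i)) := by
        simp [hy, hT (x i) (hx i)]
      rw [this]
      simp only [norm_smul, Complex.norm_real, Real.norm_eq_abs,
        abs_of_nonneg (hvpos i), mul_assoc]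
    -- nonnegativity and bound for hvSup
    have hvSup_nonneg : 0 ≤ hvSup p v U lam x := by
      apply Real.iSup_nonneg
      intro g
      exact Real.rpow_nonneg (Finset.sum_nonneg fun i _ =>
        mul_nonneg (mul_nonneg (Real.rpow_nonneg (norm_nonneg _) _)
          (Real.rpow_nonneg (hvpos i) _)) (Real.rpow_nonneg (norm_nonneg _) _)) _
    have hbdd : BddAbove (Set.range fun g : HvBall v U =>
        (∑ i, ‖lam i‖ ^ p * v (x i) ^ p * ‖(g : E → ℂ) (x i)‖ ^ p) ^ (1 / p)) := by
      refine ⟨(∑ i, ‖lam i‖ ^ p) ^ (1 / p), ?_⟩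
      rintro _ ⟨⟨g, hg⟩, rfl⟩
      apply Real.rpow_le_rpow (Finset.sum_nonneg fun i _ =>
        mul_nonneg (mul_nonneg (Real.rpow_nonneg (norm_nonneg _) _)
          (Real.rpow_nonneg (hvpos i) _)) (Real.rpow_nonneg (norm_nonneg _) _))
      · apply Finset.sum_le_sum
        intro i _
        have h1 : v (x i) ^ p * ‖g (x i)‖ ^ p = (v (x i) * ‖g (x i)‖) ^ p :=
          (Real.mul_rpow (hvpos i) (norm_nonneg _)).symm
        rw [mul_assoc, h1]
        have h2 : (v (x i) * ‖g (x i)‖) ^ p ≤ 1 :=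
          Real.rpow_le_one (mul_nonneg (hvpos i) (norm_nonneg _)) (hg.2 (x i) (hx i)) hp0.le
        calc ‖lam i‖ ^ p * (v (x i) * ‖g (x i)‖) ^ p
            ≤ ‖lam i‖ ^ p * 1 := by
              exact mul_le_mul_of_nonneg_left h2 (Real.rpow_nonneg (norm_nonneg _) _)
          _ = ‖lam i‖ ^ p := mul_one _
      · positivity
    have hsup : linSup p y ≤ hvSup p v U lam x := by
      apply Real.iSup_le _ hvSup_nonneg
      rintro ⟨φ, hφ⟩
      have hg : (fun z => φ (Δ z)) ∈ HvBall v U := hdual₁ φ hφ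
      have heq : (∑ i, ‖φ (y i)‖ ^ p) ^ (1 / p)
          = (∑ i, ‖lam i‖ ^ p * v (x i) ^ p * ‖φ (Δ (x i))‖ ^ p) ^ (1 / p) := by
        congr 1
        refine Finset.sum_congr rfl fun i _ => ?_
        rw [hnormφ φ i, Real.mul_rpow (mul_nonneg (norm_nonneg _) (hvpos i)) (norm_nonneg _),
          Real.mul_rpow (norm_nonneg _) (hvpos i)]
      rw [heq]
      exact le_ciSup hbdd (⟨fun z => φ (Δ z), hg⟩ : HvBall v U)
    have hsum : (∑ i, ‖lam i‖ ^ p * v (x i) ^ p * ‖f (x i)‖ ^ p)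
        = ∑ i, ‖T (y i)‖ ^ p := by
      refine Finset.sum_congr rfl fun i _ => ?_
      rw [hnormT i, Real.mul_rpow (mul_nonneg (norm_nonneg _) (hvpos i)) (norm_nonneg _),
        Real.mul_rpow (norm_nonneg _) (hvpos i)]
    rw [hsum]
    calc (∑ i, ‖T (y i)‖ ^ p) ^ (1 / p) ≤ C * linSup p y := hLin n y
      _ ≤ C * hvSup p v U lam x := mul_le_mul_of_nonneg_left hsup hC
  obtain ⟨C, hC, hLin⟩ := hTp
  refine ⟨⟨C, hC, main C hC hLin⟩, ?_⟩
  apply csInf_le_csInf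
  · exact ⟨0, fun c hc => hc.1⟩
  · exact ⟨C, hC, hLin⟩
  · rintro c ⟨hc0, hc⟩
    exact ⟨hc0, main c hc0 hc⟩
end
end

section
/- If f : U → F is weighted holomorphic and S : F → G is a p-summing bounded linear operator, then S ∘ f is p-summing weighted holomorphic with π_p^{Hv}(S ∘ f) ≤ π_p(S)·‖f‖_v. -/
open scoped BigOperators
open MeasureTheory

noncomputable section

section AuxProof

open Finset

lemma zero_mem_HvBall' {E : Type*} [NormedAddCommGroup E] [NormedSpace ℂ E]
    (v : E → ℝ) (U : Set E) : (0 : E → ℂ) ∈ HvBall v U :=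
  ⟨differentiableOn_const 0, fun x _ => by simp⟩

lemma hvSup_bdd' {E : Type*} [NormedAddCommGroup E] [NormedSpace ℂ E]
    {p : ℝ} (hp : 1 ≤ p) {v : E → ℝ} {U : Set E} {n : ℕ}
    (lam : Fin n → ℂ) (x : Fin n → E) (hx : ∀ i, x i ∈ U) (hv : ∀ y ∈ U, 0 < v y) :
    BddAbove (Set.range fun g : HvBall v U =>
      (∑ i, ‖lam i‖ ^ p * v (x i) ^ p * ‖(g : E → ℂ) (x i)‖ ^ p) ^ (1 / p)) := by
  have hp0 : (0:ℝ) < p := lt_of_lt_of_le one_pos hp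
  refine ⟨(∑ i, ‖lam i‖ ^ p) ^ (1 / p), ?_⟩
  rintro r ⟨g, rfl⟩
  refine Real.rpow_le_rpow (Finset.sum_nonneg fun i _ => ?_) ?_ (by positivity)
  · have := (hv _ (hx i)).le
    positivity
  · refine Finset.sum_le_sum fun i _ => ?_
    have h1 : v (x i) * ‖(g : E → ℂ) (x i)‖ ≤ 1 := g.2.2 _ (hx i)
    have hv0 := (hv _ (hx i)).le
    calc ‖lam i‖ ^ p * v (x i) ^ p * ‖(g : E → ℂ) (x i)‖ ^ p
        = ‖lam i‖ ^ p * (v (x i) * ‖(g : E → ℂ) (x i)‖) ^ p := by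
          rw [Real.mul_rpow hv0 (norm_nonneg _), mul_assoc]
      _ ≤ ‖lam i‖ ^ p * 1 := by
          have := Real.rpow_le_one (mul_nonneg hv0 (norm_nonneg _)) h1 hp0.le
          have h2 : (0:ℝ) ≤ ‖lam i‖ ^ p := Real.rpow_nonneg (norm_nonneg _) _
          nlinarith
      _ = ‖lam i‖ ^ p := mul_one _

lemma hvSup_nonneg' {E : Type*} [NormedAddCommGroup E] [NormedSpace ℂ E]
    {p : ℝ} (hp : 1 ≤ p) {v : E → ℝ} {U : Set E} {n : ℕ}
    (lam : Fin n → ℂ) (x : Fin n → E) (hx : ∀ i, x i ∈ U) (hv : ∀ y ∈ U, 0 < v y) :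
    0 ≤ hvSup p v U lam x := by
  have hp0 : (0:ℝ) < p := lt_of_lt_of_le one_pos hp
  refine le_ciSup_of_le (hvSup_bdd' hp lam x hx hv) ⟨0, zero_mem_HvBall' v U⟩ (le_of_eq ?_)
  simp [Real.zero_rpow hp0.ne', one_div, Real.zero_rpow (inv_ne_zero hp0.ne')]

lemma linSup_bdd' {G : Type*} [NormedAddCommGroup G] [NormedSpace ℂ G]
    {p : ℝ} (hp : 1 ≤ p) {n : ℕ} (x : Fin n → G) :
    BddAbove (Set.range fun φ : {φ : G →L[ℂ] ℂ // ‖φ‖ ≤ 1} =>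
      (∑ i, ‖(φ : G →L[ℂ] ℂ) (x i)‖ ^ p) ^ (1 / p)) := by
  have hp0 : (0:ℝ) < p := lt_of_lt_of_le one_pos hp
  refine ⟨(∑ i, ‖x i‖ ^ p) ^ (1 / p), ?_⟩
  rintro r ⟨φ, rfl⟩
  refine Real.rpow_le_rpow (Finset.sum_nonneg fun i _ => by positivity) ?_ (by positivity)
  refine Finset.sum_le_sum fun i _ => Real.rpow_le_rpow (norm_nonneg _) ?_ hp0.le
  exact le_trans ((φ : G →L[ℂ] ℂ).le_opNorm _)
    (mul_le_of_le_one_left (norm_nonneg _) φ.2)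

lemma linSup_nonneg' {G : Type*} [NormedAddCommGroup G] [NormedSpace ℂ G]
    {p : ℝ} (hp : 1 ≤ p) {n : ℕ} (x : Fin n → G) : 0 ≤ linSup p x := by
  have hp0 : (0:ℝ) < p := lt_of_lt_of_le one_pos hp
  refine le_ciSup_of_le (linSup_bdd' hp x) ⟨0, by simp⟩ (le_of_eq ?_)
  simp [Real.zero_rpow hp0.ne', one_div, Real.zero_rpow (inv_ne_zero hp0.ne')]

lemma linPSumming_linPi' {G F : Type*} [NormedAddCommGroup G] [NormedSpace ℂ G]
    [NormedAddCommGroup F] [NormedSpace ℂ F] {p : ℝ} (hp : 1 ≤ p) (S : G →L[ℂ] F)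
    (hS : ∃ C, 0 ≤ C ∧ LinPSummingWith p S C) : LinPSummingWith p S (linPi p S) := by
  intro n x
  obtain ⟨C, hC0, hC⟩ := hS
  have hs0 : 0 ≤ linSup p x := linSup_nonneg' hp x
  rcases hs0.eq_or_lt with h0 | hs
  · have := hC n x
    rw [← h0, mul_zero] at this ⊢
    exact this
  · rw [← div_le_iff₀ hs]
    refine le_csInf ⟨C, hC0, hC⟩ fun b hb => ?_
    rw [div_le_iff₀ hs]
    exact hb.2 n x

lemma linPi_nonneg' {G F : Type*} [NormedAddCommGroup G] [NormedSpace ℂ G]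
    [NormedAddCommGroup F] [NormedSpace ℂ F] {p : ℝ} (S : G →L[ℂ] F)
    (hS : ∃ C, 0 ≤ C ∧ LinPSummingWith p S C) : 0 ≤ linPi p S :=
  le_csInf (by obtain ⟨C, h⟩ := hS; exact ⟨C, h⟩) fun b hb => hb.1

lemma psumming_comp' {E F G : Type*} [NormedAddCommGroup E] [NormedSpace ℂ E]
    [NormedAddCommGroup F] [NormedSpace ℂ F]
    [NormedAddCommGroup G] [NormedSpace ℂ G]
    (U : Set E) (v : E → ℝ) (hv : ∀ x ∈ U, 0 < v x) {p : ℝ} (hp : 1 ≤ p)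
    (f : E → F) (hf : DifferentiableOn ℂ f U)
    (hfv : BddAbove (Set.range fun x : U => v (x : E) * ‖f (x : E)‖))
    (S : F →L[ℂ] G) {C : ℝ} (hC0 : 0 ≤ C) (hC : LinPSummingWith p S C) :
    PSummingWith p v U (fun x => S (f x)) (C * ⨆ x : U, v (x : E) * ‖f (x : E)‖) := by
  intro n lam x hx
  set M := ⨆ x : U, v (x : E) * ‖f (x : E)‖ with hMdef
  have hM0 : 0 ≤ M := Real.iSup_nonneg fun z => mul_nonneg (hv _ z.2).le (norm_nonneg _)
  have hle : ∀ z ∈ U, v z * ‖f z‖ ≤ M := fun z hz => le_ciSup hfv ⟨z, hz⟩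
  have hp0 : (0:ℝ) < p := lt_of_lt_of_le one_pos hp
  rcases hM0.eq_or_lt with h0 | hMpos
  · -- M = 0 : f vanishes on U
    have hf0 : ∀ i, f (x i) = 0 := fun i => by
      have h1 := hle _ (hx i)
      have h2 := hv _ (hx i)
      have h3 := norm_nonneg (f (x i))
      rw [← h0] at h1
      have : ‖f (x i)‖ = 0 := by nlinarith
      exact norm_eq_zero.mp this
    have hz : (∑ i, ‖lam i‖ ^ p * v (x i) ^ p * ‖S (f (x i))‖ ^ p) = 0 :=
      Finset.sum_eq_zero fun i _ => by simp [hf0 i, Real.zero_rpow hp0.ne']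
    rw [hz, Real.zero_rpow (by positivity : (1/p : ℝ) ≠ 0), ← h0, mul_zero, zero_mul]
  · -- main case M > 0
    set y : Fin n → F := fun i => (lam i * (v (x i) : ℂ)) • f (x i) with hy
    have hSy : ∀ i, ‖S (y i)‖ = ‖lam i‖ * v (x i) * ‖S (f (x i))‖ := fun i => by
      simp [hy, norm_smul, Complex.norm_real, abs_of_nonneg (hv _ (hx i)).le]
    have hterm : ∀ i, ‖lam i‖ ^ p * v (x i) ^ p * ‖S (f (x i))‖ ^ p = ‖S (y i)‖ ^ p := fun i => by
      rw [hSy i, Real.mul_rpow (mul_nonneg (norm_nonneg _) (hv _ (hx i)).le) (norm_nonneg _),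
        Real.mul_rpow (norm_nonneg _) (hv _ (hx i)).le]
    have hmain : linSup p y ≤ M * hvSup p v U lam x := by
      haveI : Nonempty {φ : F →L[ℂ] ℂ // ‖φ‖ ≤ 1} := ⟨⟨0, by simp⟩⟩
      refine ciSup_le fun φ' => ?_
      obtain ⟨φ, hφ⟩ := φ'
      have hφf : ∀ z, ‖φ (f z)‖ ≤ ‖f z‖ := fun z =>
        le_trans (φ.le_opNorm _) (mul_le_of_le_one_left (norm_nonneg _) hφ)
      set g : E → ℂ := fun z => (M : ℂ)⁻¹ * φ (f z) with hg
      have hgn : ∀ z, ‖g z‖ = M⁻¹ * ‖φ (f z)‖ := fun z => by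
        show ‖(M : ℂ)⁻¹ * φ (f z)‖ = _
        rw [norm_mul, norm_inv, Complex.norm_real, Real.norm_eq_abs, abs_of_nonneg hM0]
      have hgmem : g ∈ HvBall v U := by
        refine ⟨(differentiableOn_const _).mul (φ.differentiable.comp_differentiableOn hf),
          fun z hz => ?_⟩
        rw [hgn z]
        calc v z * (M⁻¹ * ‖φ (f z)‖) = M⁻¹ * (v z * ‖φ (f z)‖) := by ring
          _ ≤ M⁻¹ * (v z * ‖f z‖) :=
              mul_le_mul_of_nonneg_left
                (mul_le_mul_of_nonneg_left (hφf z) (hv _ hz).le) (inv_nonneg.mpr hM0)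
          _ ≤ M⁻¹ * M := mul_le_mul_of_nonneg_left (hle z hz) (inv_nonneg.mpr hM0)
          _ = 1 := inv_mul_cancel₀ hMpos.ne'
      have hkey : ∀ i, ‖φ (y i)‖ ^ p = M ^ p * (‖lam i‖ ^ p * v (x i) ^ p * ‖g (x i)‖ ^ p) := by
        intro i
        have e1 : ‖φ (y i)‖ = ‖lam i‖ * v (x i) * ‖φ (f (x i))‖ := by
          simp [hy, norm_smul, Complex.norm_real, abs_of_nonneg (hv _ (hx i)).le]
        rw [e1, hgn (x i),
          Real.mul_rpow (mul_nonneg (norm_nonneg _) (hv _ (hx i)).le) (norm_nonneg _),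
          Real.mul_rpow (norm_nonneg _) (hv _ (hx i)).le,
          Real.mul_rpow (inv_nonneg.mpr hM0) (norm_nonneg _)]
        have h1 : M ^ p * M⁻¹ ^ p = 1 := by
          rw [← Real.mul_rpow hM0 (inv_nonneg.mpr hM0), mul_inv_cancel₀ hMpos.ne',
            Real.one_rpow]
        calc ‖lam i‖ ^ p * v (x i) ^ p * ‖φ (f (x i))‖ ^ p
            = (M ^ p * M⁻¹ ^ p) * (‖lam i‖ ^ p * v (x i) ^ p * ‖φ (f (x i))‖ ^ p) := by
              rw [h1, one_mul]
          _ = M ^ p * (‖lam i‖ ^ p * v (x i) ^ p * (M⁻¹ ^ p * ‖φ (f (x i))‖ ^ p)) := by ring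
      have hsum : ∑ i, ‖φ (y i)‖ ^ p
          = M ^ p * ∑ i, ‖lam i‖ ^ p * v (x i) ^ p * ‖g (x i)‖ ^ p := by
        rw [Finset.mul_sum]; exact Finset.sum_congr rfl fun i _ => hkey i
      have hsnn : (0:ℝ) ≤ ∑ i, ‖lam i‖ ^ p * v (x i) ^ p * ‖g (x i)‖ ^ p :=
        Finset.sum_nonneg fun i _ => by
          have := (hv _ (hx i)).le
          positivity
      calc (∑ i, ‖φ (y i)‖ ^ p) ^ (1 / p)
          = M * (∑ i, ‖lam i‖ ^ p * v (x i) ^ p * ‖g (x i)‖ ^ p) ^ (1 / p) := by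
            rw [hsum, one_div, Real.mul_rpow (Real.rpow_nonneg hM0 _) hsnn,
              Real.rpow_rpow_inv hM0 hp0.ne']
        _ ≤ M * hvSup p v U lam x := by
            refine mul_le_mul_of_nonneg_left ?_ hM0
            exact le_ciSup (hvSup_bdd' hp lam x hx hv) (⟨g, hgmem⟩ : HvBall v U)
    calc (∑ i, ‖lam i‖ ^ p * v (x i) ^ p * ‖S (f (x i))‖ ^ p) ^ (1 / p)
        = (∑ i, ‖S (y i)‖ ^ p) ^ (1 / p) := by
          rw [Finset.sum_congr rfl fun i _ => hterm i]
      _ ≤ C * linSup p y := hC n y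
      _ ≤ C * (M * hvSup p v U lam x) := mul_le_mul_of_nonneg_left hmain hC0
      _ = C * M * hvSup p v U lam x := (mul_assoc _ _ _).symm

end AuxProof

/-- Composition of a weighted holomorphic map with a `p`-summing operator is `p`-summing
weighted holomorphic, with `π_p^{Hv}(S ∘ f) ≤ π_p(S) ⬝ ‖f‖_v`. -/
theorem stmt3 {E F G : Type*} [NormedAddCommGroup E] [NormedSpace ℂ E] [CompleteSpace E]
    [NormedAddCommGroup F] [NormedSpace ℂ F] [CompleteSpace F]
    [NormedAddCommGroup G] [NormedSpace ℂ G] [CompleteSpace G]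
    (U : Set E) (hU : IsOpen U) (v : E → ℝ) (hv : ∀ x ∈ U, 0 < v x)
    (hvc : ContinuousOn v U) (p : ℝ) (hp : 1 ≤ p)
    (f : E → F) (hf : DifferentiableOn ℂ f U)
    (hfv : BddAbove (Set.range fun x : U => v (x : E) * ‖f (x : E)‖))
    (S : F →L[ℂ] G) (hS : ∃ C, 0 ≤ C ∧ LinPSummingWith p S C) :
    (∃ C, 0 ≤ C ∧ PSummingWith p v U (fun x => S (f x)) C) ∧
      pihv p v U (fun x => S (f x)) ≤ linPi p S * ⨆ x : U, v (x : E) * ‖f (x : E)‖ := by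
  have hM0 : 0 ≤ ⨆ x : U, v (x : E) * ‖f (x : E)‖ :=
    Real.iSup_nonneg fun z => mul_nonneg (hv _ z.2).le (norm_nonneg _)
  obtain ⟨C, hC0, hC⟩ := hS
  constructor
  · exact ⟨C * ⨆ x : U, v (x : E) * ‖f (x : E)‖, mul_nonneg hC0 hM0,
      psumming_comp' U v hv hp f hf hfv S hC0 hC⟩
  · refine csInf_le ⟨0, fun b hb => hb.1⟩ ?_
    exact ⟨mul_nonneg (linPi_nonneg' S ⟨C, hC0, hC⟩) hM0,
      psumming_comp' U v hv hp f hf hfv S (linPi_nonneg' S ⟨C, hC0, hC⟩)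
        (linPSumming_linPi' hp S ⟨C, hC0, hC⟩)⟩
end
end

section
/- Injectivity: if f : U → F is weighted holomorphic, ι : F → G is an isometric linear embedding, and ι ∘ f is p-summing weighted holomorphic, then f is p-summing weighted holomorphic and π_p^{Hv}(f) = π_p^{Hv}(ι ∘ f). -/
open scoped BigOperators
open MeasureTheory

noncomputable section

/-- Injectivity: if `ι : F → G` is an isometric linear embedding and `ι ∘ f` is
`p`-summing weighted holomorphic, then so is `f`, with `π_p^{Hv}(f) = π_p^{Hv}(ι∘f)`. -/
theorem stmt7 {E F G : Type*} [NormedAddCommGroup E] [NormedSpace ℂ E] [CompleteSpace E]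
    [NormedAddCommGroup F] [NormedSpace ℂ F] [CompleteSpace F]
    [NormedAddCommGroup G] [NormedSpace ℂ G] [CompleteSpace G]
    (U : Set E) (hU : IsOpen U) (v : E → ℝ) (hv : ∀ x ∈ U, 0 < v x)
    (hvc : ContinuousOn v U) (p : ℝ) (hp : 1 ≤ p)
    (ι : F →ₗᵢ[ℂ] G) (f : E → F) (hf : DifferentiableOn ℂ f U)
    (hfv : ∃ K, ∀ x ∈ U, v x * ‖f x‖ ≤ K)
    (hcomp : ∃ C, 0 ≤ C ∧ PSummingWith p v U (fun x => ι (f x)) C) :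
    (∃ C, 0 ≤ C ∧ PSummingWith p v U f C) ∧
      pihv p v U f = pihv p v U (fun x => ι (f x)) := by
  have key : ∀ C, PSummingWith p v U f C ↔ PSummingWith p v U (fun x => ι (f x)) C := by
    intro C
    unfold PSummingWith
    simp only [ι.norm_map]
  constructor
  · obtain ⟨C, hC0, hC⟩ := hcomp
    exact ⟨C, hC0, (key C).mpr hC⟩
  · unfold pihv
    congr 1
    ext C
    simp [key C]
end
end

section
/- If a weighted holomorphic f : U → F admits a Pietsch-type domination ‖f(x)‖ ≤ C(∫_{B_{Hv(U)}}|g(x)|^p dμ(g))^{1/p} for all x ∈ U, for some probability measure μ on the weak*-compact unit ball B_{Hv(U)}, then f is p-summing weighted holomorphic with π_p^{Hv}(f) ≤ C. -/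
open scoped BigOperators
open MeasureTheory

noncomputable section

/-- If a weighted holomorphic `f` admits a Pietsch-type domination with constant `C` and
probability measure `μ` on `B_{Hv(U)}`, then `f` is `p`-summing weighted holomorphic with
`π_p^{Hv}(f) ≤ C`. -/
theorem stmt9 {E F : Type*} [NormedAddCommGroup E] [NormedSpace ℂ E] [CompleteSpace E]
    [NormedAddCommGroup F] [NormedSpace ℂ F] [CompleteSpace F]
    (U : Set E) (hU : IsOpen U) (v : E → ℝ) (hv : ∀ x ∈ U, 0 < v x)
    (hvc : ContinuousOn v U) (p : ℝ) (hp : 1 ≤ p)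
    (f : E → F) (hf : DifferentiableOn ℂ f U)
    (hfv : ∃ K, ∀ x ∈ U, v x * ‖f x‖ ≤ K)
    (C : ℝ) (hC : 0 ≤ C) (μ : Measure (HvBall v U)) [IsProbabilityMeasure μ]
    (hdom : ∀ x ∈ U, ‖f x‖ ≤ C * (∫ g, ‖(g : E → ℂ) x‖ ^ p ∂μ) ^ (1 / p)) :
    PSummingWith p v U f C ∧ pihv p v U f ≤ C := by
  have hp0 : 0 < p := lt_of_lt_of_le one_pos hp
  have hp0' : p ≠ 0 := ne_of_gt hp0
  have key : PSummingWith p v U f C := by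
    intro n lam x hx
    have hanonneg : ∀ i, (0:ℝ) ≤ ‖lam i‖ ^ p * v (x i) ^ p := fun i =>
      mul_nonneg (Real.rpow_nonneg (norm_nonneg _) _)
        (Real.rpow_nonneg (hv _ (hx i)).le _)
    -- per-g sum bound
    have hgsum : ∀ g : HvBall v U,
        ∑ i, ‖lam i‖ ^ p * v (x i) ^ p * ‖(g : E → ℂ) (x i)‖ ^ p ≤ ∑ i, ‖lam i‖ ^ p := by
      intro g
      refine Finset.sum_le_sum fun i _ => ?_
      have h1 : v (x i) * ‖(g : E → ℂ) (x i)‖ ≤ 1 := g.2.2 (x i) (hx i)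
      have hv0 : (0:ℝ) ≤ v (x i) := (hv _ (hx i)).le
      calc ‖lam i‖ ^ p * v (x i) ^ p * ‖(g : E → ℂ) (x i)‖ ^ p
          = ‖lam i‖ ^ p * (v (x i) * ‖(g : E → ℂ) (x i)‖) ^ p := by
            rw [Real.mul_rpow hv0 (norm_nonneg _), mul_assoc]
        _ ≤ ‖lam i‖ ^ p * 1 := by
            refine mul_le_mul_of_nonneg_left ?_ (Real.rpow_nonneg (norm_nonneg _) _)
            calc (v (x i) * ‖(g : E → ℂ) (x i)‖) ^ p
                ≤ (1:ℝ) ^ p := Real.rpow_le_rpow (mul_nonneg hv0 (norm_nonneg _)) h1 hp0.le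
              _ = 1 := Real.one_rpow p
        _ = ‖lam i‖ ^ p := mul_one _
    have hgsumnn : ∀ g : HvBall v U,
        (0:ℝ) ≤ ∑ i, ‖lam i‖ ^ p * v (x i) ^ p * ‖(g : E → ℂ) (x i)‖ ^ p := fun g =>
      Finset.sum_nonneg fun i _ =>
        mul_nonneg (hanonneg i) (Real.rpow_nonneg (norm_nonneg _) _)
    have hbdd : BddAbove (Set.range fun g : HvBall v U =>
        (∑ i, ‖lam i‖ ^ p * v (x i) ^ p * ‖(g : E → ℂ) (x i)‖ ^ p) ^ (1 / p)) := by
      refine ⟨(∑ i, ‖lam i‖ ^ p) ^ (1 / p), ?_⟩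
      rintro _ ⟨g, rfl⟩
      exact Real.rpow_le_rpow (hgsumnn g) (hgsum g) (by positivity)
    set S := hvSup p v U lam x with hSdef
    have hS0 : 0 ≤ S := Real.iSup_nonneg fun g => Real.rpow_nonneg (hgsumnn g) _
    have hle_Sp : ∀ g : HvBall v U,
        ∑ i, ‖lam i‖ ^ p * v (x i) ^ p * ‖(g : E → ℂ) (x i)‖ ^ p ≤ S ^ p := by
      intro g
      have h := le_ciSup hbdd g
      have h2 := Real.rpow_le_rpow (Real.rpow_nonneg (hgsumnn g) _) h hp0.le
      rwa [← Real.rpow_mul (hgsumnn g), one_div_mul_cancel hp0', Real.rpow_one] at h2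
    -- measurability and integrability
    have hmeas : ∀ i, Measurable fun g : HvBall v U => ‖(g : E → ℂ) (x i)‖ ^ p := fun i =>
      (((measurable_pi_apply (x i)).comp measurable_subtype_coe).norm).pow_const _
    have hint : ∀ i, Integrable (fun g : HvBall v U => ‖(g : E → ℂ) (x i)‖ ^ p) μ := by
      intro i
      refine Integrable.mono' (integrable_const ((1 / v (x i)) ^ p))
        (hmeas i).aestronglyMeasurable (Filter.Eventually.of_forall fun g => ?_)
      rw [Real.norm_eq_abs, abs_of_nonneg (Real.rpow_nonneg (norm_nonneg _) _)]
      refine Real.rpow_le_rpow (norm_nonneg _) ?_ hp0.le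
      rw [le_div_iff₀ (hv _ (hx i)), mul_comm]
      exact g.2.2 (x i) (hx i)
    have hswap : ∑ i, ‖lam i‖ ^ p * v (x i) ^ p * ∫ g, ‖(g : E → ℂ) (x i)‖ ^ p ∂μ
        = ∫ g, ∑ i, ‖lam i‖ ^ p * v (x i) ^ p * ‖(g : E → ℂ) (x i)‖ ^ p ∂μ := by
      rw [integral_finset_sum _ fun i _ => (hint i).const_mul _]
      exact Finset.sum_congr rfl fun i _ => (integral_const_mul _ _).symm
    have hintle : ∫ g, ∑ i, ‖lam i‖ ^ p * v (x i) ^ p * ‖(g : E → ℂ) (x i)‖ ^ p ∂μ ≤ S ^ p := by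
      have h := integral_mono (integrable_finset_sum _ fun i _ => (hint i).const_mul _)
        (integrable_const (S ^ p)) hle_Sp
      simpa using h
    have hfp : ∀ i, ‖f (x i)‖ ^ p ≤ C ^ p * ∫ g, ‖(g : E → ℂ) (x i)‖ ^ p ∂μ := by
      intro i
      have hI : (0:ℝ) ≤ ∫ g, ‖(g : E → ℂ) (x i)‖ ^ p ∂μ :=
        integral_nonneg fun g => Real.rpow_nonneg (norm_nonneg _) _
      have h := Real.rpow_le_rpow (norm_nonneg _) (hdom (x i) (hx i)) hp0.le
      rwa [Real.mul_rpow hC (Real.rpow_nonneg hI _), ← Real.rpow_mul hI,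
        one_div_mul_cancel hp0', Real.rpow_one] at h
    have hsum : ∑ i, ‖lam i‖ ^ p * v (x i) ^ p * ‖f (x i)‖ ^ p ≤ C ^ p * S ^ p := by
      calc ∑ i, ‖lam i‖ ^ p * v (x i) ^ p * ‖f (x i)‖ ^ p
          ≤ ∑ i, ‖lam i‖ ^ p * v (x i) ^ p * (C ^ p * ∫ g, ‖(g : E → ℂ) (x i)‖ ^ p ∂μ) :=
            Finset.sum_le_sum fun i _ => mul_le_mul_of_nonneg_left (hfp i) (hanonneg i)
        _ = C ^ p * ∑ i, ‖lam i‖ ^ p * v (x i) ^ p * ∫ g, ‖(g : E → ℂ) (x i)‖ ^ p ∂μ := by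
            rw [Finset.mul_sum]; exact Finset.sum_congr rfl fun i _ => by ring
        _ = C ^ p * ∫ g, ∑ i, ‖lam i‖ ^ p * v (x i) ^ p * ‖(g : E → ℂ) (x i)‖ ^ p ∂μ := by
            rw [hswap]
        _ ≤ C ^ p * S ^ p := mul_le_mul_of_nonneg_left hintle (Real.rpow_nonneg hC _)
    have hfnn : (0:ℝ) ≤ ∑ i, ‖lam i‖ ^ p * v (x i) ^ p * ‖f (x i)‖ ^ p :=
      Finset.sum_nonneg fun i _ =>
        mul_nonneg (hanonneg i) (Real.rpow_nonneg (norm_nonneg _) _)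
    have h := Real.rpow_le_rpow hfnn hsum (by positivity : (0:ℝ) ≤ 1 / p)
    rwa [Real.mul_rpow (Real.rpow_nonneg hC _) (Real.rpow_nonneg hS0 _),
      ← Real.rpow_mul hC, mul_one_div_cancel hp0', Real.rpow_one,
      ← Real.rpow_mul hS0, mul_one_div_cancel hp0', Real.rpow_one] at h
  refine ⟨key, ?_⟩
  exact csInf_le ⟨0, fun c hc => hc.1⟩ ⟨hC, key⟩
end
end

section
/- For each x ∈ U and y ∈ F, the functional v(x)δ_x ⊗ y on Hv(U,F*), defined by (v(x)δ_x ⊗ y)(f) = v(x)⟨f(x), y⟩, is a bounded linear functional with norm exactly v(x)·‖δ_x‖·‖y‖, where ‖δ_x‖ = sup_{g∈B_{Hv(U)}}|g(x)|. -/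
open scoped BigOperators
open MeasureTheory

noncomputable section

/-- `‖δ_z‖ = sup_{g ∈ B_{Hv(U)}} |g(z)|`. -/
def dnorm {E : Type*} [NormedAddCommGroup E] [NormedSpace ℂ E]
    (v : E → ℝ) (U : Set E) (z : E) : ℝ :=
  ⨆ g : HvBall v U, ‖(g : E → ℂ) z‖

/-- `f` belongs to `Hv(U, F*)`. -/
def MemHvDual {E F : Type*} [NormedAddCommGroup E] [NormedSpace ℂ E]
    [NormedAddCommGroup F] [NormedSpace ℂ F]
    (v : E → ℝ) (U : Set E) (f : E → (F →L[ℂ] ℂ)) : Prop :=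
  DifferentiableOn ℂ f U ∧ ∃ K, ∀ x ∈ U, v x * ‖f x‖ ≤ K

/-- The action of the molecule `∑ λᵢ v(xᵢ) δ_{xᵢ} ⊗ yᵢ` on `f ∈ Hv(U,F*)`. -/
def molAct {E F : Type*} [NormedAddCommGroup E] [NormedSpace ℂ E]
    [NormedAddCommGroup F] [NormedSpace ℂ F]
    (v : E → ℝ) {n : ℕ} (lam : Fin n → ℂ) (x : Fin n → E) (y : Fin n → F)
    (f : E → (F →L[ℂ] ℂ)) : ℂ :=
  ∑ i, lam i * (v (x i) : ℂ) * (f (x i)) (y i)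

/-!
For `f` in the unit ball of `Hv(U,F*)` and `y ≠ 0`, the scalar function `z ↦ f(z)(y) / ‖y‖` lies in
`B_{Hv(U)}`, so `v(x)|f(x)(y)| ≤ v(x)‖δ_x‖‖y‖`. Conversely every `g ∈ B_{Hv(U)}` gives
`g ⊗ φ ∈ B_{Hv(U,F*)}` for a norming functional `φ` of `y`, whose value is `v(x)|g(x)|‖y‖`;
taking the supremum over `g` shows that the bound is sharp.
-/

namespace HvBall

variable {E : Type*} [NormedAddCommGroup E] [NormedSpace ℂ E] {v : E → ℝ} {U : Set E}

lemma zero_mem : (0 : E → ℂ) ∈ HvBall v U :=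
  ⟨differentiableOn_const 0, fun z _ => by simp⟩

instance : Nonempty (HvBall v U) := ⟨⟨0, zero_mem⟩⟩

lemma bddAbove_range_norm_apply {x : E} (hx : x ∈ U) (hvx : 0 < v x) :
    BddAbove (Set.range fun g : HvBall v U => ‖(g : E → ℂ) x‖) := by
  refine ⟨(v x)⁻¹, ?_⟩
  rintro _ ⟨g, rfl⟩
  rw [← mul_one (v x)⁻¹, le_inv_mul_iff₀ hvx]
  exact g.2.2 x hx

lemma inv_smul_mem_of_bound {g : E → ℂ} {c : ℝ} (hc : 0 < c) (hg : DifferentiableOn ℂ g U)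
    (hgc : ∀ z ∈ U, v z * ‖g z‖ ≤ c) :
    ((c : ℂ)⁻¹ • g) ∈ HvBall v U := by
  refine ⟨hg.const_smul _, fun z hz => ?_⟩
  have hnorm : ‖((c : ℂ)⁻¹ • g) z‖ = c⁻¹ * ‖g z‖ := by
    simp [abs_of_pos hc]
  rw [hnorm, mul_left_comm, inv_mul_le_one₀ hc]
  exact hgc z hz

lemma norm_apply_le_mul_dnorm {g : E → ℂ} {c : ℝ} {x : E} (hx : x ∈ U)
    (hvx : 0 < v x) (hc : 0 < c) (hg : DifferentiableOn ℂ g U)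
    (hgc : ∀ z ∈ U, v z * ‖g z‖ ≤ c) :
    ‖g x‖ ≤ c * dnorm v U x := by
  have hle : ‖((c : ℂ)⁻¹ • g) x‖ ≤ dnorm v U x :=
    le_ciSup (bddAbove_range_norm_apply hx hvx) ⟨_, inv_smul_mem_of_bound hc hg hgc⟩
  rw [Pi.smul_apply, norm_smul, norm_inv, Complex.norm_real, Real.norm_of_nonneg hc.le,
    inv_mul_le_iff₀ hc] at hle
  exact hle

end HvBall

section DualValued

variable {E F : Type*} [NormedAddCommGroup E] [NormedSpace ℂ E]
  [NormedAddCommGroup F] [NormedSpace ℂ F] {v : E → ℝ} {U : Set E}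

lemma norm_apply_apply_le_dnorm_mul {f : E → (F →L[ℂ] ℂ)} {x : E} (hx : x ∈ U)
    (hv : ∀ z ∈ U, 0 ≤ v z) (hvx : 0 < v x) (hf : DifferentiableOn ℂ f U)
    (hf1 : ∀ z ∈ U, v z * ‖f z‖ ≤ 1) (y : F) :
    ‖f x y‖ ≤ dnorm v U x * ‖y‖ := by
  rcases eq_or_ne y 0 with rfl | hy
  · simp
  rw [mul_comm]
  refine HvBall.norm_apply_le_mul_dnorm hx hvx (norm_pos_iff.mpr hy)
    (hf.clm_apply (differentiableOn_const y)) fun z hz => ?_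
  calc v z * ‖f z y‖ ≤ v z * (‖f z‖ * ‖y‖) := by gcongr; exacts [hv z hz, (f z).le_opNorm y]
    _ = (v z * ‖f z‖) * ‖y‖ := by ring
    _ ≤ 1 * ‖y‖ := by gcongr; exact hf1 z hz
    _ = ‖y‖ := one_mul _

lemma HvBall.exists_dual_norm_apply_eq {g : E → ℂ} (hg : g ∈ HvBall v U)
    (hv : ∀ z ∈ U, 0 ≤ v z) (x : E) (y : F) :
    ∃ f : E → (F →L[ℂ] ℂ), DifferentiableOn ℂ f U ∧ (∀ z ∈ U, v z * ‖f z‖ ≤ 1) ∧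
      ‖f x y‖ = ‖g x‖ * ‖y‖ := by
  obtain ⟨φ, hφ, hφy⟩ := exists_dual_vector'' ℂ y
  refine ⟨fun z => g z • φ, hg.1.smul_const φ, fun z hz => ?_, ?_⟩
  · calc v z * ‖g z • φ‖ = v z * ‖g z‖ * ‖φ‖ := by rw [norm_smul, mul_assoc]
      _ ≤ v z * ‖g z‖ * 1 := by gcongr; exact mul_nonneg (hv z hz) (norm_nonneg _)
      _ ≤ 1 := by rw [mul_one]; exact hg.2 z hz
  · simp [hφy]

end DualValued

theorem stmt13_general {E F : Type*} [NormedAddCommGroup E] [NormedSpace ℂ E]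
    [NormedAddCommGroup F] [NormedSpace ℂ F]
    (U : Set E) (v : E → ℝ) (hv : ∀ x ∈ U, 0 < v x)
    (x : E) (hx : x ∈ U) (y : F) :
    IsLUB {t : ℝ | ∃ f : E → (F →L[ℂ] ℂ), DifferentiableOn ℂ f U ∧
        (∀ z ∈ U, v z * ‖f z‖ ≤ 1) ∧ t = v x * ‖(f x) y‖}
      (v x * dnorm v U x * ‖y‖) := by
  have hvx := hv x hx
  have hv₀ : ∀ z ∈ U, 0 ≤ v z := fun z hz => (hv z hz).le
  refine ⟨?_, fun b hb => ?_⟩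
  · rintro _ ⟨f, hf, hf1, rfl⟩
    rw [mul_assoc]
    exact mul_le_mul_of_nonneg_left (norm_apply_apply_le_dnorm_mul hx hv₀ hvx hf hf1 y) hvx.le
  · have hb' : ∀ g : HvBall v U, v x * ‖y‖ * ‖(g : E → ℂ) x‖ ≤ b := fun g => by
      obtain ⟨f, hf, hf1, hfxy⟩ := HvBall.exists_dual_norm_apply_eq g.2 hv₀ x y
      exact (le_of_eq (by rw [hfxy]; ring)).trans (hb ⟨f, hf, hf1, rfl⟩)
    calc v x * dnorm v U x * ‖y‖ = ⨆ g : HvBall v U, v x * ‖y‖ * ‖(g : E → ℂ) x‖ := by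
          rw [dnorm, ← Real.mul_iSup_of_nonneg (by positivity)]; ring
      _ ≤ b := ciSup_le hb'

/-- For `x ∈ U` and `y ∈ F`, the functional `v(x)δ_x ⊗ y : f ↦ v(x)⟨f(x),y⟩` on
`Hv(U,F*)` is bounded with norm exactly `v(x)‖δ_x‖‖y‖`: this value is the least upper
bound of its values on the unit ball of `Hv(U,F*)`. -/
theorem stmt13 {E F : Type*} [NormedAddCommGroup E] [NormedSpace ℂ E] [CompleteSpace E]
    [NormedAddCommGroup F] [NormedSpace ℂ F] [CompleteSpace F]
    (U : Set E) (hU : IsOpen U) (v : E → ℝ) (hv : ∀ x ∈ U, 0 < v x)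
    (hvc : ContinuousOn v U)
    (x : E) (hx : x ∈ U) (y : F) :
    IsLUB {t : ℝ | ∃ f : E → (F →L[ℂ] ℂ), DifferentiableOn ℂ f U ∧
        (∀ z ∈ U, v z * ‖f z‖ ≤ 1) ∧ t = v x * ‖(f x) y‖}
      (v x * dnorm v U x * ‖y‖) :=
  stmt13_general U v hv x hx y
end
end

section
/- The ∞-Chevet–Saphar Hv-norm admits the formula: for γ ∈ lin((vΔ_v)(U)) ⊗ F, d_∞^{Hv}(γ) = inf { sup_{g∈B_{Hv(U)}} ∑ᵢ |λᵢ| v(xᵢ) |g(xᵢ)| ‖yᵢ‖ }, the infimum over all representations γ = ∑ᵢ λᵢ v(xᵢ)δ_{xᵢ} ⊗ yᵢ. -/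
open scoped BigOperators
open MeasureTheory

noncomputable section

section Aux

variable {E : Type*} [NormedAddCommGroup E] [NormedSpace ℂ E]

lemma hvball_nonempty (v : E → ℝ) (U : Set E) : Nonempty (HvBall v U) :=
  ⟨⟨fun _ => 0, differentiableOn_const 0, fun x _ => by simp⟩⟩

lemma bddA (v : E → ℝ) (U : Set E) (hv : ∀ x ∈ U, 0 < v x) {m : ℕ}
    (mu : Fin m → ℂ) (z : Fin m → E) (hz : ∀ j, z j ∈ U) :
    BddAbove (Set.range fun g : HvBall v U =>
      ∑ j, ‖mu j‖ * v (z j) * ‖(g : E → ℂ) (z j)‖) := by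
  refine ⟨∑ j, ‖mu j‖, ?_⟩
  rintro _ ⟨g, rfl⟩
  refine Finset.sum_le_sum fun j _ => ?_
  have h := g.2.2 (z j) (hz j)
  calc ‖mu j‖ * v (z j) * ‖(g : E → ℂ) (z j)‖
      = ‖mu j‖ * (v (z j) * ‖(g : E → ℂ) (z j)‖) := by ring
    _ ≤ ‖mu j‖ * 1 := mul_le_mul_of_nonneg_left h (norm_nonneg _)
    _ = ‖mu j‖ := mul_one _

lemma bddB {F : Type*} [NormedAddCommGroup F] (v : E → ℝ) (U : Set E)
    (hv : ∀ x ∈ U, 0 < v x) {m : ℕ}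
    (mu : Fin m → ℂ) (z : Fin m → E) (hz : ∀ j, z j ∈ U) (w : Fin m → F) :
    BddAbove (Set.range fun g : HvBall v U =>
      ∑ j, ‖mu j‖ * v (z j) * ‖(g : E → ℂ) (z j)‖ * ‖w j‖) := by
  refine ⟨∑ j, ‖mu j‖ * ‖w j‖, ?_⟩
  rintro _ ⟨g, rfl⟩
  refine Finset.sum_le_sum fun j _ => ?_
  have h := g.2.2 (z j) (hz j)
  calc ‖mu j‖ * v (z j) * ‖(g : E → ℂ) (z j)‖ * ‖w j‖
      = ‖mu j‖ * (v (z j) * ‖(g : E → ℂ) (z j)‖) * ‖w j‖ := by ring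
    _ ≤ ‖mu j‖ * 1 * ‖w j‖ := by
        exact mul_le_mul_of_nonneg_right
          (mul_le_mul_of_nonneg_left h (norm_nonneg _)) (norm_nonneg _)
    _ = ‖mu j‖ * ‖w j‖ := by ring

end Aux

/-- Formula for the `∞`-Chevet–Saphar `Hv`-norm: the infimum of
`(sup_{g∈B_{Hv(U)}} ∑ⱼ |μⱼ| v(zⱼ)|g(zⱼ)|) ⬝ max_j ‖wⱼ‖` over all representations equals
the infimum of `sup_{g∈B_{Hv(U)}} ∑ⱼ |μⱼ| v(zⱼ)|g(zⱼ)| ‖wⱼ‖` over all representations. -/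
theorem stmt17 {E F : Type*} [NormedAddCommGroup E] [NormedSpace ℂ E] [CompleteSpace E]
    [NormedAddCommGroup F] [NormedSpace ℂ F] [CompleteSpace F]
    (U : Set E) (hU : IsOpen U) (v : E → ℝ) (hv : ∀ x ∈ U, 0 < v x)
    (hvc : ContinuousOn v U)
    (n : ℕ) (lam : Fin n → ℂ) (x : Fin n → E) (y : Fin n → F) (hx : ∀ i, x i ∈ U) :
    sInf {t : ℝ | ∃ (m : ℕ) (mu : Fin m → ℂ) (z : Fin m → E) (w : Fin m → F),
        (∀ j, z j ∈ U) ∧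
        (∀ f, MemHvDual v U f → molAct v lam x y f = molAct v mu z w f) ∧
        t = (⨆ g : HvBall v U, ∑ j, ‖mu j‖ * v (z j) * ‖(g : E → ℂ) (z j)‖) *
            ⨆ j, ‖w j‖}
      = sInf {s : ℝ | ∃ (m : ℕ) (mu : Fin m → ℂ) (z : Fin m → E) (w : Fin m → F),
        (∀ j, z j ∈ U) ∧
        (∀ f, MemHvDual v U f → molAct v lam x y f = molAct v mu z w f) ∧
        s = ⨆ g : HvBall v U, ∑ j, ‖mu j‖ * v (z j) * ‖(g : E → ℂ) (z j)‖ * ‖w j‖} := by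
  have hne : Nonempty (HvBall v U) := hvball_nonempty v U
  have hS1ne : ∃ t, t ∈ {t : ℝ | ∃ (m : ℕ) (mu : Fin m → ℂ) (z : Fin m → E) (w : Fin m → F),
        (∀ j, z j ∈ U) ∧
        (∀ f, MemHvDual v U f → molAct v lam x y f = molAct v mu z w f) ∧
        t = (⨆ g : HvBall v U, ∑ j, ‖mu j‖ * v (z j) * ‖(g : E → ℂ) (z j)‖) *
            ⨆ j, ‖w j‖} := ⟨_, n, lam, x, y, hx, fun f _ => rfl, rfl⟩
  have hS2ne : ∃ s, s ∈ {s : ℝ | ∃ (m : ℕ) (mu : Fin m → ℂ) (z : Fin m → E) (w : Fin m → F),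
        (∀ j, z j ∈ U) ∧
        (∀ f, MemHvDual v U f → molAct v lam x y f = molAct v mu z w f) ∧
        s = ⨆ g : HvBall v U, ∑ j, ‖mu j‖ * v (z j) * ‖(g : E → ℂ) (z j)‖ * ‖w j‖} :=
    ⟨_, n, lam, x, y, hx, fun f _ => rfl, rfl⟩
  have hbdd1 : BddBelow {t : ℝ | ∃ (m : ℕ) (mu : Fin m → ℂ) (z : Fin m → E) (w : Fin m → F),
        (∀ j, z j ∈ U) ∧
        (∀ f, MemHvDual v U f → molAct v lam x y f = molAct v mu z w f) ∧
        t = (⨆ g : HvBall v U, ∑ j, ‖mu j‖ * v (z j) * ‖(g : E → ℂ) (z j)‖) *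
            ⨆ j, ‖w j‖} := by
    refine ⟨0, ?_⟩
    rintro _ ⟨m, mu, z, w, hz, _, rfl⟩
    refine mul_nonneg (Real.iSup_nonneg fun g => Finset.sum_nonneg fun j _ => ?_)
      (Real.iSup_nonneg fun j => norm_nonneg _)
    exact mul_nonneg (mul_nonneg (norm_nonneg _) (hv _ (hz j)).le) (norm_nonneg _)
  have hbdd2 : BddBelow {s : ℝ | ∃ (m : ℕ) (mu : Fin m → ℂ) (z : Fin m → E) (w : Fin m → F),
        (∀ j, z j ∈ U) ∧
        (∀ f, MemHvDual v U f → molAct v lam x y f = molAct v mu z w f) ∧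
        s = ⨆ g : HvBall v U, ∑ j, ‖mu j‖ * v (z j) * ‖(g : E → ℂ) (z j)‖ * ‖w j‖} := by
    refine ⟨0, ?_⟩
    rintro _ ⟨m, mu, z, w, hz, _, rfl⟩
    refine Real.iSup_nonneg fun g => Finset.sum_nonneg fun j _ => ?_
    exact mul_nonneg
      (mul_nonneg (mul_nonneg (norm_nonneg _) (hv _ (hz j)).le) (norm_nonneg _))
      (norm_nonneg _)
  apply le_antisymm
  · -- sInf S1 ≤ sInf S2 : given a representation for S2, build a normalized one for S1
    refine le_csInf hS2ne ?_
    rintro s ⟨m, mu, z, w, hz, hmol, rfl⟩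
    set mu' : Fin m → ℂ := fun j => mu j * (‖w j‖ : ℂ) with hmu'
    set w' : Fin m → F := fun j => (‖w j‖)⁻¹ • w j with hw'
    have hmol' : ∀ f, MemHvDual v U f → molAct v lam x y f = molAct v mu' z w' f := by
      intro f hf
      rw [hmol f hf]
      unfold molAct
      refine Finset.sum_congr rfl fun j _ => ?_
      by_cases hwz : w j = 0
      · simp [hmu', hw', hwz]
      · have h1 : (f (z j)) (w' j) = ((‖w j‖)⁻¹ : ℝ) • (f (z j)) (w j) :=
          (f (z j)).map_smul_of_tower _ _
        rw [h1, Complex.real_smul, hmu']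
        have h3 : (‖w j‖ : ℝ) ≠ 0 := norm_ne_zero_iff.mpr hwz
        have h4 : ((‖w j‖ : ℝ) : ℂ) ≠ 0 := by exact_mod_cast h3
        push_cast
        field_simp
    have hAeq : (⨆ g : HvBall v U, ∑ j, ‖mu' j‖ * v (z j) * ‖(g : E → ℂ) (z j)‖)
        = ⨆ g : HvBall v U, ∑ j, ‖mu j‖ * v (z j) * ‖(g : E → ℂ) (z j)‖ * ‖w j‖ := by
      refine iSup_congr fun g => Finset.sum_congr rfl fun j _ => ?_
      simp only [hmu', norm_mul, Complex.norm_real, Real.norm_of_nonneg (norm_nonneg _)]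
      ring
    have hM' : (⨆ j, ‖w' j‖) ≤ 1 := by
      refine Real.iSup_le (fun j => ?_) zero_le_one
      simp only [hw', norm_smul, norm_inv, norm_norm]
      by_cases hwz : w j = 0
      · simp [hwz]
      · exact le_of_eq (inv_mul_cancel₀ (norm_ne_zero_iff.mpr hwz))
    have hsnn : 0 ≤ ⨆ g : HvBall v U, ∑ j, ‖mu j‖ * v (z j) * ‖(g : E → ℂ) (z j)‖ * ‖w j‖ := by
      refine Real.iSup_nonneg fun g => Finset.sum_nonneg fun j _ => ?_
      exact mul_nonneg
        (mul_nonneg (mul_nonneg (norm_nonneg _) (hv _ (hz j)).le) (norm_nonneg _))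
        (norm_nonneg _)
    calc sInf _ ≤ (⨆ g : HvBall v U, ∑ j, ‖mu' j‖ * v (z j) * ‖(g : E → ℂ) (z j)‖) *
            ⨆ j, ‖w' j‖ := csInf_le hbdd1 ⟨m, mu', z, w', hz, hmol', rfl⟩
      _ ≤ (⨆ g : HvBall v U, ∑ j, ‖mu j‖ * v (z j) * ‖(g : E → ℂ) (z j)‖ * ‖w j‖) * 1 := by
          rw [hAeq]; exact mul_le_mul_of_nonneg_left hM' hsnn
      _ = _ := mul_one _
  · -- sInf S2 ≤ sInf S1 : the same representation works
    refine le_csInf hS1ne ?_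
    rintro t ⟨m, mu, z, w, hz, hmol, rfl⟩
    have hMnn : 0 ≤ ⨆ j, ‖w j‖ := Real.iSup_nonneg fun j => norm_nonneg _
    have hAnn : 0 ≤ ⨆ g : HvBall v U, ∑ j, ‖mu j‖ * v (z j) * ‖(g : E → ℂ) (z j)‖ :=
      Real.iSup_nonneg fun g => Finset.sum_nonneg fun j _ =>
        mul_nonneg (mul_nonneg (norm_nonneg _) (hv _ (hz j)).le) (norm_nonneg _)
    refine (csInf_le hbdd2 ⟨m, mu, z, w, hz, hmol, rfl⟩).trans ?_
    refine Real.iSup_le (fun g => ?_) (mul_nonneg hAnn hMnn)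
    calc ∑ j, ‖mu j‖ * v (z j) * ‖(g : E → ℂ) (z j)‖ * ‖w j‖
        ≤ ∑ j, ‖mu j‖ * v (z j) * ‖(g : E → ℂ) (z j)‖ * (⨆ j, ‖w j‖) :=
          Finset.sum_le_sum fun j _ =>
            mul_le_mul_of_nonneg_left (le_ciSup (f := fun j => ‖w j‖) (Set.finite_range _).bddAbove j)
              (mul_nonneg (mul_nonneg (norm_nonneg _) (hv _ (hz j)).le) (norm_nonneg _))
      _ = (∑ j, ‖mu j‖ * v (z j) * ‖(g : E → ℂ) (z j)‖) * ⨆ j, ‖w j‖ :=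
          (Finset.sum_mul _ _ _).symm
      _ ≤ (⨆ g : HvBall v U, ∑ j, ‖mu j‖ * v (z j) * ‖(g : E → ℂ) (z j)‖) * ⨆ j, ‖w j‖ :=
          mul_le_mul_of_nonneg_right (le_ciSup (bddA v U hv mu z hz) g) hMnn
end
end

section
/- The space (Hv(U,F*), ‖·‖_v) of weighted holomorphic mappings into F* is isometrically isomorphic to the dual of the completion of lin((vΔ_v)(U)) ⊗ F under the operator norm inherited from Hv(U,F*)*, via Λ(f)(∑ᵢ λᵢ v(xᵢ)δ_{xᵢ} ⊗ yᵢ) = ∑ᵢ λᵢ v(xᵢ)⟨f(xᵢ), yᵢ⟩, with inverse ⟨Λ^{-1}(φ)(x), y⟩ = φ(δ_x ⊗ y). -/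
open scoped BigOperators
open MeasureTheory

noncomputable section

/-- The molecule norm inherited from `Hv(U,F*)*`. -/
def molNorm {E F : Type*} [NormedAddCommGroup E] [NormedSpace ℂ E]
    [NormedAddCommGroup F] [NormedSpace ℂ F]
    (v : E → ℝ) (U : Set E) {n : ℕ}
    (lam : Fin n → ℂ) (x : Fin n → E) (y : Fin n → F) : ℝ :=
  sSup {t : ℝ | ∃ f : E → (F →L[ℂ] ℂ), DifferentiableOn ℂ f U ∧
    (∀ z ∈ U, v z * ‖f z‖ ≤ 1) ∧ t = ‖molAct v lam x y f‖}

/-!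
A functional `φ` of norm `K` on the molecules satisfies, with the factor `K`, every estimate that
the unit ball of `Hv(U, F*)` satisfies uniformly on a finite combination of point evaluations.
Combinations at a single point give linearity of `φ(x, ·)` and `v(x)‖φ(x, ·)‖ ≤ K`. For
holomorphy, near `x₀` the unit ball is uniformly bounded, so by the Schwarz lemma its members
have Taylor remainders `O(‖w‖²)` with a uniform constant; combinations of point evaluations with
vanishing moments of order `0` and `1` only see these remainders. Transferred to `φ`, this makes
the difference quotients along lines Cauchy, shows that their limits are additive in the direction,
and gives the quadratic remainder estimate that makes the limit a Fréchet derivative.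
-/

open Metric Set Filter Topology

section OneVariable

variable {V : Type*} [NormedAddCommGroup V] [NormedSpace ℂ V] {G : ℂ → V} {c z : ℂ} {R M : ℝ}

theorem Complex.norm_dslope_le_of_norm_le (hd : DifferentiableOn ℂ G (ball c R))
    (hb : ∀ w ∈ ball c R, ‖G w‖ ≤ M) (hz : z ∈ ball c R) : ‖dslope G c z‖ ≤ 2 * M / R := by
  refine Complex.norm_dslope_le_div_of_mapsTo_ball hd (fun w hw => ?_) hz
  rw [mem_closedBall, dist_eq_norm, two_mul]
  exact (norm_sub_le _ _).trans (add_le_add (hb w hw) (hb c (mem_ball_self (pos_of_mem_ball hz))))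

theorem Complex.norm_sub_sub_smul_deriv_le [CompleteSpace V] (hd : DifferentiableOn ℂ G (ball c R))
    (hb : ∀ w ∈ ball c R, ‖G w‖ ≤ M) (hz : z ∈ ball c R) :
    ‖G z - G c - (z - c) • deriv G c‖ ≤ 4 * M / R ^ 2 * ‖z - c‖ ^ 2 := by
  have hR : 0 < R := pos_of_mem_ball hz
  have hd₁ : DifferentiableOn ℂ (dslope G c) (ball c R) :=
    (Complex.differentiableOn_dslope (ball_mem_nhds c hR)).mpr hd
  have hb₁ := norm_dslope_le_of_norm_le hd₁ (fun w hw => norm_dslope_le_of_norm_le hd hb hw) hz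
  have key : G z - G c - (z - c) • deriv G c = (z - c) • (z - c) • dslope (dslope G c) c z := by
    rw [sub_smul_dslope (dslope G c), smul_sub, sub_smul_dslope, dslope_same]
  rw [key, norm_smul, norm_smul, ← mul_assoc, ← sq]
  calc ‖z - c‖ ^ 2 * ‖dslope (dslope G c) c z‖ ≤ ‖z - c‖ ^ 2 * (2 * (2 * M / R) / R) := by gcongr
    _ = 4 * M / R ^ 2 * ‖z - c‖ ^ 2 := by field_simp; ring

end OneVariable

section Taylor

variable {E V : Type*} [NormedAddCommGroup E] [NormedSpace ℂ E]
  [NormedAddCommGroup V] [NormedSpace ℂ V] [CompleteSpace V]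

theorem norm_sub_sub_fderiv_le_of_norm_le {g : E → V} {x₀ w : E} {r M : ℝ}
    (hd : DifferentiableOn ℂ g (ball x₀ r)) (hb : ∀ z ∈ ball x₀ r, ‖g z‖ ≤ M) (hw : ‖w‖ < r) :
    ‖g (x₀ + w) - g x₀ - fderiv ℂ g x₀ w‖ ≤ 4 * M / r ^ 2 * ‖w‖ ^ 2 := by
  rcases eq_or_ne w 0 with rfl | hw0
  · simp
  have hwpos : 0 < ‖w‖ := norm_pos_iff.mpr hw0
  have hr : 0 < r := hwpos.trans hw
  have hmaps : MapsTo (fun s : ℂ => x₀ + s • w) (ball 0 (r / ‖w‖)) (ball x₀ r) := fun s hs => by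
    rw [mem_ball_zero_iff, lt_div_iff₀ hwpos] at hs
    rwa [mem_ball_iff_norm, add_sub_cancel_left, norm_smul]
  have hdG : DifferentiableOn ℂ (fun s : ℂ => g (x₀ + s • w)) (ball 0 (r / ‖w‖)) :=
    hd.comp (by fun_prop) hmaps
  have hderiv : deriv (fun s : ℂ => g (x₀ + s • w)) 0 = fderiv ℂ g x₀ w :=
    (hd.differentiableAt (ball_mem_nhds x₀ hr)).lineDeriv_eq_fderiv
  have h1 : (1 : ℂ) ∈ ball 0 (r / ‖w‖) := by
    rwa [mem_ball_zero_iff, norm_one, one_lt_div hwpos]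
  have := Complex.norm_sub_sub_smul_deriv_le hdG (fun s hs => hb _ (hmaps hs)) h1
  rw [hderiv] at this
  convert this using 1
  · simp
  · field_simp
    simp

end Taylor

theorem exists_tendsto_of_norm_sub_le {α G : Type*} [NormedAddCommGroup G] [CompleteSpace G]
    {l : Filter α} [l.NeBot] {h : α → G} {ε : α → ℝ} {T : Set α} (hT : T ∈ l)
    (hε : Tendsto ε l (𝓝 0)) (H : ∀ s ∈ T, ∀ t ∈ T, ‖h s - h t‖ ≤ ε s + ε t) :
    ∃ L, Tendsto h l (𝓝 L) := by
  refine cauchy_map_iff_exists_tendsto.mp (cauchy_map_iff'.mpr ?_)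
  rw [tendsto_uniformity_iff_dist_tendsto_zero]
  refine squeeze_zero' (Eventually.of_forall fun _ => dist_nonneg) ?_
    (by simpa using (hε.comp tendsto_fst).add (hε.comp tendsto_snd))
  filter_upwards [prod_mem_prod hT hT] with p hp
  rw [dist_eq_norm]
  exact H _ hp.1 _ hp.2

theorem hasFDerivAt_of_norm_sub_le_sq {𝕜 E G : Type*} [NontriviallyNormedField 𝕜]
    [NormedAddCommGroup E] [NormedSpace 𝕜 E] [NormedAddCommGroup G] [NormedSpace 𝕜 G]
    {f : E → G} {A : E →L[𝕜] G} {x : E} {C : ℝ}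
    (h : ∀ᶠ w in 𝓝 0, ‖f (x + w) - f x - A w‖ ≤ C * ‖w‖ ^ 2) : HasFDerivAt f A x := by
  rw [hasFDerivAt_iff_isLittleO_nhds_zero]
  refine (Asymptotics.IsBigO.of_bound C ?_).trans_isLittleO
    (Asymptotics.isLittleO_norm_pow_id one_lt_two)
  simpa using h

theorem eventually_add_smul_mem_ball {𝕜 E : Type*} [NormedField 𝕜] [NormedAddCommGroup E]
    [NormedSpace 𝕜 E] (x₀ u : E) {r : ℝ} (hr : 0 < r) :
    ∀ᶠ s in 𝓝 (0 : 𝕜), x₀ + s • u ∈ ball x₀ r :=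
  (Continuous.tendsto' (by fun_prop) 0 x₀ (by simp)).eventually (ball_mem_nhds x₀ hr)

theorem exists_ball_subset_forall_half_le {X : Type*} [PseudoMetricSpace X] {v : X → ℝ}
    {U : Set X} (hU : IsOpen U) (hvc : ContinuousOn v U) {z : X}
    (hz : z ∈ U) (hvz : 0 < v z) : ∃ r > 0, ball z r ⊆ U ∧ ∀ w ∈ ball z r, v z / 2 ≤ v w := by
  have hlt : ∀ᶠ w in 𝓝 z, v z / 2 < v w :=
    (hvc.continuousAt (hU.mem_nhds hz)).eventually (lt_mem_nhds (half_lt_self hvz))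
  obtain ⟨r, hr, hsub⟩ := Metric.mem_nhds_iff.mp (hlt.and (hU.mem_nhds hz))
  exact ⟨r, hr, fun w hw => (hsub hw).2, fun w hw => (hsub hw).1.le⟩

theorem ContinuousLinearMap.mul_opNorm_le_of_forall {𝕜 F G : Type*} [NontriviallyNormedField 𝕜]
    [NormedAddCommGroup F] [NormedSpace 𝕜 F] [NormedAddCommGroup G] [NormedSpace 𝕜 G]
    (A : F →L[𝕜] G) {a K : ℝ} (ha : 0 < a) (hK : 0 ≤ K) (h : ∀ y, a * ‖A y‖ ≤ K * ‖y‖) :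
    a * ‖A‖ ≤ K := by
  rw [← le_div_iff₀' ha]
  refine A.opNorm_le_bound (by positivity) fun y => ?_
  rw [div_mul_eq_mul_div, le_div_iff₀' ha]
  exact h y

/-- For `S` the unit ball of `Hv(U, G)`: `δ_x ↦ f x` extends to an operator of norm at most `K` on
the span of the `δ_x`, `x ∈ U`. -/
def PointEvalDominated {X G : Type*} [NormedAddCommGroup G] [NormedSpace ℂ G]
    (S : Set (X → G)) (U : Set X) (K : ℝ) (f : X → G) : Prop :=
  ∀ (n : ℕ) (c : Fin n → ℂ) (x : Fin n → X), (∀ i, x i ∈ U) → ∀ B : ℝ,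
    (∀ g ∈ S, ‖∑ i, c i • g (x i)‖ ≤ B) → ‖∑ i, c i • f (x i)‖ ≤ K * B

namespace PointEvalDominated

section General

variable {X G : Type*} [NormedAddCommGroup G] [NormedSpace ℂ G]
  {S : Set (X → G)} {U : Set X} {K : ℝ} {f : X → G}

theorem norm_le (hf : PointEvalDominated S U K f) {z : X} (hz : z ∈ U) {M : ℝ}
    (hM : ∀ g ∈ S, ‖g z‖ ≤ M) : ‖f z‖ ≤ K * M := by
  simpa using hf 1 ![1] ![z] (by simpa) M (by simpa)

theorem sum_eq_zero (hf : PointEvalDominated S U K f) {n : ℕ} {c : Fin n → ℂ} {x : Fin n → X}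
    (hx : ∀ i, x i ∈ U) (h : ∀ g ∈ S, ∑ i, c i • g (x i) = 0) : ∑ i, c i • f (x i) = 0 :=
  norm_le_zero_iff.mp <| by simpa using hf n c x hx 0 fun g hg => by simp [h g hg]

end General

section Holomorphic

variable {E G : Type*} [NormedAddCommGroup E] [NormedSpace ℂ E]
  [NormedAddCommGroup G] [NormedSpace ℂ G] [CompleteSpace G]
  {S : Set (E → G)} {U : Set E} {K M r : ℝ} {x₀ : E} {f : E → G}
  (hf : PointEvalDominated S U K f) (hball : ball x₀ r ⊆ U)
  (hS : ∀ g ∈ S, DifferentiableOn ℂ g (ball x₀ r) ∧ ∀ z ∈ ball x₀ r, ‖g z‖ ≤ M)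
include hf hball hS

theorem norm_sum_le_of_moments_eq_zero {n : ℕ} (c : Fin n → ℂ) {x : Fin n → E}
    (hx : ∀ i, x i ∈ ball x₀ r) (h₀ : ∑ i, c i = 0) (h₁ : ∑ i, c i • (x i - x₀) = 0) :
    ‖∑ i, c i • f (x i)‖ ≤ K * (4 * M / r ^ 2 * ∑ i, ‖c i‖ * ‖x i - x₀‖ ^ 2) := by
  refine hf n c x (fun i => hball (hx i)) _ fun g hg => ?_
  have hrem : ∑ i, c i • g (x i) =
      ∑ i, c i • (g (x₀ + (x i - x₀)) - g x₀ - fderiv ℂ g x₀ (x i - x₀)) := by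
    have hlin : ∑ i, c i • fderiv ℂ g x₀ (x i - x₀) = 0 := by
      simp_rw [← map_smul]
      rw [← map_sum, h₁, map_zero]
    simp only [add_sub_cancel, smul_sub, Finset.sum_sub_distrib, hlin, ← Finset.sum_smul, h₀,
      zero_smul, sub_zero]
  rw [hrem, Finset.mul_sum]
  refine (norm_sum_le _ _).trans (Finset.sum_le_sum fun i _ => ?_)
  rw [norm_smul, mul_left_comm]
  gcongr
  exact norm_sub_sub_fderiv_le_of_norm_le (hS g hg).1 (hS g hg).2 (mem_ball_iff_norm.mp (hx i))

theorem norm_slope_sub_slope_le (u : E) {s t : ℂ} (hs : s ≠ 0) (ht : t ≠ 0)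
    (hsu : x₀ + s • u ∈ ball x₀ r) (htu : x₀ + t • u ∈ ball x₀ r) :
    ‖s⁻¹ • (f (x₀ + s • u) - f x₀) - t⁻¹ • (f (x₀ + t • u) - f x₀)‖ ≤
      K * (4 * M / r ^ 2 * ‖u‖ ^ 2) * ‖s‖ + K * (4 * M / r ^ 2 * ‖u‖ ^ 2) * ‖t‖ := by
  have hx₀ : x₀ ∈ ball x₀ r := mem_ball_self (pos_of_mem_ball hsu)
  have := hf.norm_sum_le_of_moments_eq_zero hball hS ![s⁻¹, -t⁻¹, t⁻¹ - s⁻¹]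
    (x := ![x₀ + s • u, x₀ + t • u, x₀]) (by intro i; fin_cases i <;> assumption)
    (by simp [Fin.sum_univ_succ]; ring) (by simp [Fin.sum_univ_succ, smul_smul, hs, ht])
  convert this using 1
  · congr 1
    simp [Fin.sum_univ_succ]
    module
  · simp [Fin.sum_univ_succ, norm_smul, norm_inv]
    field_simp

theorem norm_mixed_diff_le (u u' : E) {s : ℂ} (hsu : x₀ + s • u ∈ ball x₀ r)
    (hsu' : x₀ + s • u' ∈ ball x₀ r) (hsuu' : x₀ + s • (u + u') ∈ ball x₀ r) :
    ‖f (x₀ + s • (u + u')) - f (x₀ + s • u) - f (x₀ + s • u') + f x₀‖ ≤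
      K * (4 * M / r ^ 2 * (‖u + u'‖ ^ 2 + ‖u‖ ^ 2 + ‖u'‖ ^ 2)) * ‖s‖ ^ 2 := by
  have hx₀ : x₀ ∈ ball x₀ r := mem_ball_self (pos_of_mem_ball hsu)
  have := hf.norm_sum_le_of_moments_eq_zero hball hS ![1, -1, -1, 1]
    (x := ![x₀ + s • (u + u'), x₀ + s • u, x₀ + s • u', x₀])
    (by intro i; fin_cases i <;> assumption) (by simp [Fin.sum_univ_succ])
    (by simp [Fin.sum_univ_succ, smul_add]; abel)
  convert this using 1
  · congr 1
    simp [Fin.sum_univ_succ]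
    module
  · simp [Fin.sum_univ_succ, norm_smul, -smul_add]
    ring

theorem lineDifferentiableAt (u : E) (hr : 0 < r) : LineDifferentiableAt ℂ f x₀ u := by
  set C := K * (4 * M / r ^ 2 * ‖u‖ ^ 2)
  have hT : {s : ℂ | x₀ + s • u ∈ ball x₀ r} ∩ {0}ᶜ ∈ 𝓝[≠] (0 : ℂ) :=
    inter_mem (nhdsWithin_le_nhds (eventually_add_smul_mem_ball x₀ u hr)) self_mem_nhdsWithin
  obtain ⟨L, hL⟩ := exists_tendsto_of_norm_sub_le hT (ε := fun s => C * ‖s‖)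
    (by simpa using (tendsto_norm_zero.mono_left nhdsWithin_le_nhds).const_mul C)
    fun s hs t ht => hf.norm_slope_sub_slope_le hball hS u hs.2 ht.2 hs.1 ht.1
  exact (hasLineDerivAt_iff_tendsto_slope_zero.mpr hL).lineDifferentiableAt

theorem norm_sub_sub_lineDeriv_le {w : E} (hw : ‖w‖ < r) :
    ‖f (x₀ + w) - f x₀ - lineDeriv ℂ f x₀ w‖ ≤ K * (4 * M / r ^ 2 * ‖w‖ ^ 2) := by
  have hr : 0 < r := (norm_nonneg w).trans_lt hw
  have hw₁ : x₀ + (1 : ℂ) • w ∈ ball x₀ r := by simpa using hw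
  set C := K * (4 * M / r ^ 2 * ‖w‖ ^ 2)
  -- compare the slope at `1` with the slopes at `t → 0`
  have hlim := ((hf.lineDifferentiableAt hball hS w hr).hasLineDerivAt.tendsto_slope_zero.const_sub
    (f (x₀ + w) - f x₀)).norm
  have hbound : Tendsto (fun t : ℂ => C * ‖(1 : ℂ)‖ + C * ‖t‖) (𝓝[≠] 0) (𝓝 (C * 1 + C * 0)) := by
    simpa using ((tendsto_norm_zero.mono_left nhdsWithin_le_nhds).const_mul C).const_add C
  refine (le_of_tendsto_of_tendsto hlim hbound ?_).trans_eq (by ring)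
  filter_upwards [nhdsWithin_le_nhds (eventually_add_smul_mem_ball x₀ w hr), self_mem_nhdsWithin]
    with t ht ht0
  simpa using hf.norm_slope_sub_slope_le hball hS w one_ne_zero ht0 hw₁ ht

theorem lineDeriv_add (u u' : E) (hr : 0 < r) :
    lineDeriv ℂ f x₀ (u + u') = lineDeriv ℂ f x₀ u + lineDeriv ℂ f x₀ u' := by
  have hd : ∀ v, HasDerivAt (fun s : ℂ => f (x₀ + s • v)) (lineDeriv ℂ f x₀ v) 0 :=
    fun v => (hf.lineDifferentiableAt hball hS v hr).hasLineDerivAt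
  set ψ : ℂ → G := fun s => f (x₀ + s • (u + u')) - f (x₀ + s • u) - f (x₀ + s • u') + f x₀
  have hψ : HasDerivAt ψ (lineDeriv ℂ f x₀ (u + u') - lineDeriv ℂ f x₀ u - lineDeriv ℂ f x₀ u') 0 :=
    (((hd _).sub (hd u)).sub (hd u')).add_const _
  -- the mixed second difference is `O(s²)`, so its derivative at `0` vanishes
  have hψ₀ : HasDerivAt ψ 0 0 := by
    have := hasFDerivAt_of_norm_sub_le_sq (A := (0 : ℂ →L[ℂ] G)) (x := 0) (f := ψ)
      (C := K * (4 * M / r ^ 2 * (‖u + u'‖ ^ 2 + ‖u‖ ^ 2 + ‖u'‖ ^ 2))) ?_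
    · simpa using this.hasDerivAt
    filter_upwards [eventually_add_smul_mem_ball x₀ u hr (𝕜 := ℂ),
      eventually_add_smul_mem_ball x₀ u' hr (𝕜 := ℂ),
      eventually_add_smul_mem_ball x₀ (u + u') hr (𝕜 := ℂ)] with s h₁ h₂ h₃
    simpa [ψ] using hf.norm_mixed_diff_le hball hS u u' h₁ h₂ h₃
  have := hψ.unique hψ₀
  rwa [sub_sub, sub_eq_zero] at this

theorem norm_lineDeriv_le {w : E} (hw : ‖w‖ < r) : ‖lineDeriv ℂ f x₀ w‖ ≤ 6 * (K * M) := by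
  have hr : 0 < r := (norm_nonneg w).trans_lt hw
  have hfM : ∀ z ∈ ball x₀ r, ‖f z‖ ≤ K * M :=
    fun z hz => hf.norm_le (hball hz) fun g hg => (hS g hg).2 z hz
  have hKM : 0 ≤ K * M := (norm_nonneg _).trans (hfM x₀ (mem_ball_self hr))
  have hrem : K * (4 * M / r ^ 2 * ‖w‖ ^ 2) ≤ 4 * (K * M) := by
    rw [show K * (4 * M / r ^ 2 * ‖w‖ ^ 2) = 4 * (K * M) * (‖w‖ / r) ^ 2 by field_simp]
    exact mul_le_of_le_one_right (by positivity)
      (pow_le_one₀ (by positivity) ((div_le_one hr).mpr hw.le))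
  calc ‖lineDeriv ℂ f x₀ w‖
      = ‖(f (x₀ + w) - f x₀) - (f (x₀ + w) - f x₀ - lineDeriv ℂ f x₀ w)‖ := by
        rw [sub_sub_cancel]
    _ ≤ ‖f (x₀ + w)‖ + ‖f x₀‖ + K * (4 * M / r ^ 2 * ‖w‖ ^ 2) :=
        (norm_sub_le _ _).trans
          (add_le_add (norm_sub_le _ _) (hf.norm_sub_sub_lineDeriv_le hball hS hw))
    _ ≤ 6 * (K * M) := by
        linarith [hfM (x₀ + w) (by simpa using hw), hfM x₀ (mem_ball_self hr)]

theorem differentiableAt (hr : 0 < r) : DifferentiableAt ℂ f x₀ := by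
  let D : E →ₗ[ℂ] G :=
    { toFun := lineDeriv ℂ f x₀
      map_add' := fun u u' => hf.lineDeriv_add hball hS u u' hr
      map_smul' := fun a u =>
        ((hf.lineDifferentiableAt hball hS u hr).hasLineDerivAt.smul a).lineDeriv }
  obtain ⟨B, hB⟩ := D.bound_of_ball_bound hr _ fun w hw =>
    hf.norm_lineDeriv_le hball hS (mem_ball_zero_iff.mp hw)
  refine (hasFDerivAt_of_norm_sub_le_sq (A := D.mkContinuous B hB)
    (C := K * (4 * M / r ^ 2)) ?_).differentiableAt
  filter_upwards [ball_mem_nhds (0 : E) hr] with w hw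
  exact (hf.norm_sub_sub_lineDeriv_le hball hS (mem_ball_zero_iff.mp hw)).trans_eq (by ring)

end Holomorphic

end PointEvalDominated

section WeightedHolomorphic

variable {E G : Type*} [NormedAddCommGroup E] [NormedSpace ℂ E]
  [NormedAddCommGroup G] [NormedSpace ℂ G] {v : E → ℝ} {U : Set E}

variable (G) in
def hvUnitBall (v : E → ℝ) (U : Set E) : Set (E → G) :=
  {g | DifferentiableOn ℂ g U ∧ ∀ z ∈ U, v z * ‖g z‖ ≤ 1}

theorem zero_mem_hvUnitBall : (0 : E → G) ∈ hvUnitBall G v U :=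
  ⟨differentiableOn_const 0, fun z _ => by simp⟩

theorem norm_le_inv_of_mem_hvUnitBall {g : E → G} (hg : g ∈ hvUnitBall G v U) {z : E}
    (hz : z ∈ U) {m : ℝ} (hm : 0 < m) (hmv : m ≤ v z) : ‖g z‖ ≤ m⁻¹ := by
  rw [← one_div, le_div_iff₀' hm]
  exact (mul_le_mul_of_nonneg_right hmv (norm_nonneg _)).trans (hg.2 z hz)

theorem PointEvalDominated.differentiableOn [CompleteSpace G] (hU : IsOpen U)
    (hv : ∀ x ∈ U, 0 < v x) (hvc : ContinuousOn v U) {K : ℝ} {f : E → G}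
    (hf : PointEvalDominated (hvUnitBall G v U) U K f) : DifferentiableOn ℂ f U := by
  intro z hz
  obtain ⟨r, hr, hball, hvr⟩ := exists_ball_subset_forall_half_le hU hvc hz (hv z hz)
  refine (hf.differentiableAt hball (M := (v z / 2)⁻¹) (fun g hg => ⟨hg.1.mono hball,
    fun w hw => norm_le_inv_of_mem_hvUnitBall hg (hball hw) (half_pos (hv z hz)) (hvr w hw)⟩)
    hr).differentiableWithinAt

end WeightedHolomorphic

section Molecules

variable {E F : Type*} [NormedAddCommGroup E] [NormedSpace ℂ E]
  [NormedAddCommGroup F] [NormedSpace ℂ F] {v : E → ℝ} {U : Set E}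
  {n : ℕ} {lam : Fin n → ℂ} {x : Fin n → E} {y : Fin n → F}

/-- `φ`, read as the functional `v(x)δ_x ⊗ y ↦ v(x) φ(x, y)` on molecules, has norm at most `K`
for the norm inherited from `Hv(U, F*)*`. -/
def MoleculeBounded (v : E → ℝ) (U : Set E) (K : ℝ) (φ : E → F → ℂ) : Prop :=
  ∀ (n : ℕ) (lam : Fin n → ℂ) (x : Fin n → E) (y : Fin n → F), (∀ i, x i ∈ U) →
    ‖∑ i, lam i * (v (x i) : ℂ) * φ (x i) (y i)‖ ≤ K * molNorm v U lam x y

theorem molNorm_le {B : ℝ}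
    (h : ∀ g ∈ hvUnitBall (F →L[ℂ] ℂ) v U, ‖molAct v lam x y g‖ ≤ B) :
    molNorm v U lam x y ≤ B :=
  Real.sSup_le (by rintro t ⟨g, hg₁, hg₂, rfl⟩; exact h g ⟨hg₁, hg₂⟩)
    ((norm_nonneg _).trans (h 0 zero_mem_hvUnitBall))

theorem norm_molAct_le_of_mem_hvUnitBall (hv : ∀ x ∈ U, 0 < v x) (hx : ∀ i, x i ∈ U)
    {g : E → F →L[ℂ] ℂ} (hg : g ∈ hvUnitBall (F →L[ℂ] ℂ) v U) :
    ‖molAct v lam x y g‖ ≤ ∑ i, ‖lam i‖ * ‖y i‖ := by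
  refine (norm_sum_le _ _).trans (Finset.sum_le_sum fun i _ => ?_)
  have hvi := hv _ (hx i)
  rw [norm_mul, norm_mul, Complex.norm_real, Real.norm_of_nonneg hvi.le, mul_assoc]
  gcongr
  calc v (x i) * ‖g (x i) (y i)‖ ≤ v (x i) * ((v (x i))⁻¹ * ‖y i‖) := by
        gcongr
        exact (g (x i)).le_of_opNorm_le
          (norm_le_inv_of_mem_hvUnitBall hg (hx i) hvi le_rfl) _
    _ = ‖y i‖ := by field_simp

theorem norm_molAct_le_molNorm (hv : ∀ x ∈ U, 0 < v x) (hx : ∀ i, x i ∈ U)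
    {g : E → F →L[ℂ] ℂ} (hg : g ∈ hvUnitBall (F →L[ℂ] ℂ) v U) :
    ‖molAct v lam x y g‖ ≤ molNorm v U lam x y :=
  le_csSup ⟨_, fun _ ⟨_, hg₁, hg₂, ht⟩ => ht ▸ norm_molAct_le_of_mem_hvUnitBall hv hx ⟨hg₁, hg₂⟩⟩
    ⟨g, hg.1, hg.2, rfl⟩

theorem molAct_smul (c : ℂ) (f : E → F →L[ℂ] ℂ) :
    molAct v lam x y (c • f) = c * molAct v lam x y f := by
  simp only [molAct, Finset.mul_sum, Pi.smul_apply, FunLike.coe_smul, smul_eq_mul]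
  exact Finset.sum_congr rfl fun i _ => by ring

theorem moleculeBounded_of_mul_norm_le (hv : ∀ x ∈ U, 0 < v x) {f : E → F →L[ℂ] ℂ}
    (hf : DifferentiableOn ℂ f U) {C : ℝ} (hC : 0 ≤ C) (hb : ∀ x ∈ U, v x * ‖f x‖ ≤ C) :
    MoleculeBounded v U C fun x y => f x y := by
  intro n lam x y hx
  rcases hC.eq_or_lt with rfl | hC
  · have hf0 : ∀ i, f (x i) = 0 := fun i => norm_le_zero_iff.mp
      (le_of_mul_le_mul_left (by simpa using hb _ (hx i)) (hv _ (hx i)))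
    simp [hf0]
  have hnorm : ‖((C : ℂ))⁻¹‖ = C⁻¹ := by
    rw [norm_inv, Complex.norm_real, Real.norm_of_nonneg hC.le]
  have hg : ((C : ℂ))⁻¹ • f ∈ hvUnitBall (F →L[ℂ] ℂ) v U := by
    refine ⟨hf.const_smul _, fun z hz => ?_⟩
    rw [Pi.smul_apply, norm_smul, hnorm, mul_left_comm, inv_mul_le_iff₀ hC, mul_one]
    exact hb z hz
  calc ‖molAct v lam x y f‖ = C * ‖molAct v lam x y (((C : ℂ))⁻¹ • f)‖ := by
        rw [molAct_smul, norm_mul, hnorm, mul_inv_cancel_left₀ hC.ne']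
    _ ≤ C * molNorm v U lam x y := by
        gcongr
        exact norm_molAct_le_molNorm hv hx hg

namespace MoleculeBounded

variable {K : ℝ} {φ : E → F → ℂ}

theorem pointEvalDominated (hv : ∀ x ∈ U, 0 < v x) (hK : 0 ≤ K) (h : MoleculeBounded v U K φ) :
    PointEvalDominated ((fun g p => g p.1 p.2) '' hvUnitBall (F →L[ℂ] ℂ) v U) (U ×ˢ univ) K
      fun p => φ p.1 p.2 := by
  intro n c p hp B hB
  -- the molecule `∑ cᵢ / v(xᵢ) · v(xᵢ) δ_{xᵢ} ⊗ yᵢ`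
  have hsum : ∀ ψ : E → F → ℂ, ∑ i, c i / v (p i).1 * (v (p i).1 : ℂ) * ψ (p i).1 (p i).2 =
      ∑ i, c i • ψ (p i).1 (p i).2 := fun ψ => Finset.sum_congr rfl fun i _ => by
    rw [div_mul_cancel₀ _ (Complex.ofReal_ne_zero.mpr (hv _ (hp i).1).ne'), smul_eq_mul]
  have := h n (fun i => c i / v (p i).1) (fun i => (p i).1) (fun i => (p i).2) fun i => (hp i).1
  rw [hsum] at this
  refine this.trans (mul_le_mul_of_nonneg_left (molNorm_le fun g hg => ?_) hK)
  rw [molAct, hsum fun x y => g x y]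
  exact hB _ ⟨g, hg, rfl⟩

theorem mul_norm_apply_le (hv : ∀ x ∈ U, 0 < v x) (hK : 0 ≤ K) (h : MoleculeBounded v U K φ)
    {z : E} (hz : z ∈ U) (y : F) : v z * ‖φ z y‖ ≤ K * ‖y‖ := by
  have hvz := hv z hz
  have := (h.pointEvalDominated hv hK).norm_le (z := (z, y)) ⟨hz, trivial⟩ (M := (v z)⁻¹ * ‖y‖)
    fun _ ⟨g, hg, hgy⟩ => hgy ▸ (g z).le_of_opNorm_le
      (norm_le_inv_of_mem_hvUnitBall hg hz hvz le_rfl) y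
  calc v z * ‖φ z y‖ ≤ v z * (K * ((v z)⁻¹ * ‖y‖)) := by gcongr
    _ = K * ‖y‖ := by field_simp

theorem map_add (hv : ∀ x ∈ U, 0 < v x) (hK : 0 ≤ K) (h : MoleculeBounded v U K φ)
    {z : E} (hz : z ∈ U) (y₁ y₂ : F) : φ z (y₁ + y₂) = φ z y₁ + φ z y₂ := by
  have := (h.pointEvalDominated hv hK).sum_eq_zero (c := ![1, 1, -1])
    (x := ![(z, y₁), (z, y₂), (z, y₁ + y₂)]) (by intro i; fin_cases i <;> simp [hz])
    (by rintro _ ⟨g, -, rfl⟩; simp [Fin.sum_univ_succ])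
  simp [Fin.sum_univ_succ] at this
  linear_combination -this

theorem map_smul (hv : ∀ x ∈ U, 0 < v x) (hK : 0 ≤ K) (h : MoleculeBounded v U K φ)
    {z : E} (hz : z ∈ U) (a : ℂ) (y : F) : φ z (a • y) = a • φ z y := by
  have := (h.pointEvalDominated hv hK).sum_eq_zero (c := ![1, -a]) (x := ![(z, a • y), (z, y)])
    (by intro i; fin_cases i <;> simp [hz]) (by rintro _ ⟨g, -, rfl⟩; simp [Fin.sum_univ_succ])
  simp [Fin.sum_univ_succ] at this
  rw [smul_eq_mul]
  linear_combination this

theorem exists_eqOn_mul_norm_le (hv : ∀ x ∈ U, 0 < v x) (hK : 0 ≤ K)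
    (h : MoleculeBounded v U K φ) :
    ∃ f : E → F →L[ℂ] ℂ, (∀ x ∈ U, ∀ y, f x y = φ x y) ∧ ∀ x ∈ U, v x * ‖f x‖ ≤ K := by
  let A : ∀ z ∈ U, F →ₗ[ℂ] ℂ := fun z hz =>
    { toFun := φ z
      map_add' := h.map_add hv hK hz
      map_smul' := h.map_smul hv hK hz }
  have hbound : ∀ z (hz : z ∈ U) y, ‖φ z y‖ ≤ K / v z * ‖y‖ := fun z hz y => by
    rw [div_mul_eq_mul_div, le_div_iff₀' (hv z hz)]
    exact h.mul_norm_apply_le hv hK hz y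
  classical
  let f : E → F →L[ℂ] ℂ := fun z =>
    if hz : z ∈ U then (A z hz).mkContinuous (K / v z) (hbound z hz) else 0
  refine ⟨f, fun z hz y => by simp [f, A, hz], fun z hz => ?_⟩
  have hvz := hv z hz
  calc v z * ‖f z‖ ≤ v z * (K / v z) := by
        gcongr
        simpa [f, hz] using LinearMap.mkContinuous_norm_le _ (div_nonneg hK hvz.le) _
    _ = K := by field_simp

theorem pointEvalDominated_of_eqOn (hv : ∀ x ∈ U, 0 < v x) (hK : 0 ≤ K)
    (h : MoleculeBounded v U K φ) {f : E → F →L[ℂ] ℂ} (hfφ : ∀ x ∈ U, ∀ y, f x y = φ x y) :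
    PointEvalDominated (hvUnitBall (F →L[ℂ] ℂ) v U) U K f := by
  intro n c x hx B hB
  have hB₀ : 0 ≤ B := by simpa using hB 0 zero_mem_hvUnitBall
  refine ContinuousLinearMap.opNorm_le_bound _ (by positivity) fun y => ?_
  have := h.pointEvalDominated hv hK n c (fun i => (x i, y)) (fun i => ⟨hx i, trivial⟩) (B * ‖y‖)
    (by rintro _ ⟨g, hg, rfl⟩; simpa using (∑ i, c i • g (x i)).le_of_opNorm_le (hB g hg) y)
  simpa [hfφ _ (hx _), mul_assoc] using this

end MoleculeBounded

end Molecules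

theorem stmt19_general {E F : Type*} [NormedAddCommGroup E] [NormedSpace ℂ E]
    [NormedAddCommGroup F] [NormedSpace ℂ F]
    (U : Set E) (hU : IsOpen U) (v : E → ℝ) (hv : ∀ x ∈ U, 0 < v x)
    (hvc : ContinuousOn v U) :
    (∀ f : E → (F →L[ℂ] ℂ), DifferentiableOn ℂ f U → ∀ C : ℝ, 0 ≤ C →
      ((∀ x ∈ U, v x * ‖f x‖ ≤ C) ↔
        ∀ (n : ℕ) (lam : Fin n → ℂ) (x : Fin n → E) (y : Fin n → F), (∀ i, x i ∈ U) →
          ‖molAct v lam x y f‖ ≤ C * molNorm v U lam x y)) ∧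
    (∀ (φ : E → F → ℂ) (K : ℝ), 0 ≤ K →
      (∀ (n : ℕ) (lam : Fin n → ℂ) (x : Fin n → E) (y : Fin n → F), (∀ i, x i ∈ U) →
        ‖∑ i, lam i * (v (x i) : ℂ) * φ (x i) (y i)‖ ≤ K * molNorm v U lam x y) →
      ∃ f : E → (F →L[ℂ] ℂ), DifferentiableOn ℂ f U ∧
        (∀ x ∈ U, v x * ‖f x‖ ≤ K) ∧
        ∀ x ∈ U, ∀ y : F, φ x y = (f x) y) := by
  refine ⟨fun f hf C hC => ⟨moleculeBounded_of_mul_norm_le hv hf hC,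
    fun (h : MoleculeBounded v U C fun x y => f x y) z hz => ?_⟩,
    fun φ K hK (hφ : MoleculeBounded v U K φ) => ?_⟩
  · exact (f z).mul_opNorm_le_of_forall (hv z hz) hC (h.mul_norm_apply_le hv hC hz)
  · obtain ⟨f, hfφ, hfK⟩ := hφ.exists_eqOn_mul_norm_le hv hK
    exact ⟨f, (hφ.pointEvalDominated_of_eqOn hv hK hfφ).differentiableOn hU hv hvc, hfK,
      fun z hz y => (hfφ z hz y).symm⟩

/-- `(Hv(U,F*), ‖·‖_v)` is isometrically isomorphic to the dual of the completion of the
space of `F`-valued `Hv`-molecules under the norm inherited from `Hv(U,F*)*`.  First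
conjunct: `‖f‖_v ≤ C` iff the associated functional `Λ(f)` is bounded by `C` on molecules
(isometric embedding).  Second conjunct: every bounded functional on the molecules,
recorded by its values `φ(x,y) = Φ(δ_x ⊗ y)` on generators, arises from some
`f ∈ Hv(U,F*)` (surjectivity, with inverse `⟨Λ⁻¹(Φ)(x), y⟩ = Φ(δ_x ⊗ y)`). -/
theorem stmt19 {E F : Type*} [NormedAddCommGroup E] [NormedSpace ℂ E] [CompleteSpace E]
    [NormedAddCommGroup F] [NormedSpace ℂ F] [CompleteSpace F]
    (U : Set E) (hU : IsOpen U) (v : E → ℝ) (hv : ∀ x ∈ U, 0 < v x)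
    (hvc : ContinuousOn v U) :
    (∀ f : E → (F →L[ℂ] ℂ), DifferentiableOn ℂ f U → ∀ C : ℝ, 0 ≤ C →
      ((∀ x ∈ U, v x * ‖f x‖ ≤ C) ↔
        ∀ (n : ℕ) (lam : Fin n → ℂ) (x : Fin n → E) (y : Fin n → F), (∀ i, x i ∈ U) →
          ‖molAct v lam x y f‖ ≤ C * molNorm v U lam x y)) ∧
    (∀ (φ : E → F → ℂ) (K : ℝ), 0 ≤ K →
      (∀ (n : ℕ) (lam : Fin n → ℂ) (x : Fin n → E) (y : Fin n → F), (∀ i, x i ∈ U) →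
        ‖∑ i, lam i * (v (x i) : ℂ) * φ (x i) (y i)‖ ≤ K * molNorm v U lam x y) →
      ∃ f : E → (F →L[ℂ] ℂ), DifferentiableOn ℂ f U ∧
        (∀ x ∈ U, v x * ‖f x‖ ≤ K) ∧
        ∀ x ∈ U, ∀ y : F, φ x y = (f x) y) :=
  stmt19_general U hU v hv hvc
end
end
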